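/- arXiv:2407.12533 — 9 statements merged into one kernel-verified Lean document; each statement's English description precedes it below -/
import Mathlib

section
/- In a regular *-semigroup, every idempotent is a product of two projections: E(S) = {ef : e,f projections}. -/
/-- Associativity of a binary operation. -/
def Assoc {S : Type*} (m : S → S → S) : Prop :=
  ∀ a b c : S, m (m a b) c = m a (m b c)

/-- `(S, m, st)` is a regular *-semigroup. -/
def RegStar {S : Type*} (m : S → S → S) (st : S → S) : Prop :=
  Assoc m ∧ (∀ x : S, m (m x (st x)) x = x) ∧ (∀ x : S, st (st x) = x) ∧
    (∀ x y : S, st (m x y) = m (st y) (st x))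

/-- Idempotent element. -/
def Idem {S : Type*} (m : S → S → S) (e : S) : Prop := m e e = e

/-- Projection: an idempotent fixed by the involution. -/
def Proj {S : Type*} (m : S → S → S) (st : S → S) (e : S) : Prop :=
  m e e = e ∧ st e = e

/-- Green's L relation. -/
def GreenL {S : Type*} (m : S → S → S) (a b : S) : Prop :=
  a = b ∨ ∃ u v : S, a = m u b ∧ b = m v a

/-- Green's R relation. -/
def GreenR {S : Type*} (m : S → S → S) (a b : S) : Prop :=
  a = b ∨ ∃ u v : S, a = m b u ∧ b = m a v

/-- Green's H relation. -/
def GreenH {S : Type*} (m : S → S → S) (a b : S) : Prop :=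
  GreenL m a b ∧ GreenR m a b

/-- Completely regular: every element is H-related to its square. -/
def CompletelyRegular {S : Type*} (m : S → S → S) : Prop :=
  ∀ x : S, GreenH m x (m x x)

/-- Inverse semigroup: every element has a unique inverse. -/
def InverseSgp {S : Type*} (m : S → S → S) : Prop :=
  ∀ a : S, ∃! b : S, m (m a b) a = a ∧ m (m b a) b = b

/-- Locally inverse: each local submonoid `eSe` (for `e` idempotent) is inverse. -/
def LocallyInverse {S : Type*} (m : S → S → S) : Prop :=
  ∀ e : S, Idem m e → ∀ a : S, (∃ x : S, a = m (m e x) e) →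
    ∃! b : S, (∃ x : S, b = m (m e x) e) ∧ m (m a b) a = a ∧ m (m b a) b = b

/-- Orthodox: the set of idempotents is closed under multiplication. -/
def Orthodox {S : Type*} (m : S → S → S) : Prop :=
  ∀ e f : S, Idem m e → Idem m f → Idem m (m e f)

/-- Clifford: every idempotent is central. -/
def Clifford {S : Type*} (m : S → S → S) : Prop :=
  ∀ (x e : S), Idem m e → m e x = m x e
theorem stmt3 {S : Type*} (m : S → S → S) (st : S → S)
    (hS : RegStar m st) :
    {a : S | Idem m a} =
      {a : S | ∃ e f : S, Proj m st e ∧ Proj m st f ∧ a = m e f} := by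
  obtain ⟨hA, hReg, hInv, hAnti⟩ := hS
  have hA : ∀ a b c : S, m (m a b) c = m a (m b c) := hA
  ext a
  simp only [Set.mem_setOf_eq]
  constructor
  · intro ha
    have hsa : m (st a) (st a) = st a := by
      have := hAnti a a
      rw [ha] at this
      exact this.symm
    refine ⟨m a (st a), m (st a) a, ⟨?_, ?_⟩, ⟨?_, ?_⟩, ?_⟩
    · show m (m a (st a)) (m a (st a)) = m a (st a)
      rw [← hA, hReg]
    · rw [hAnti, hInv]
    · show m (m (st a) a) (m (st a) a) = m (st a) a
      rw [← hA, hA (st a) a (st a), hA, hReg]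
    · rw [hAnti, hInv]
    · show a = m (m a (st a)) (m (st a) a)
      rw [hA, ← hA (st a) (st a) a, hsa, ← hA, hReg]
  · rintro ⟨e, f, ⟨hee, hse⟩, ⟨hff, hsf⟩, rfl⟩
    have hst : st (m e f) = m f e := by rw [hAnti, hse, hsf]
    have key := hReg (m e f)
    rw [hst] at key
    simp only [hA] at key
    rw [← hA f f, hff, ← hA e e, hee] at key
    show m (m e f) (m e f) = m e f
    simp only [hA]
    exact key
end

section
/- A regular *-semigroup is an inverse semigroup if and only if any two projections commute: ef = fe for all projections e, f. -/
/-- In a semigroup with unique inverses, the product of two idempotents is idempotent. -/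
private lemma inv_idem_mul {S : Type*} {m : S → S → S} (ha : Assoc m)
    (hI : InverseSgp m) {e f : S} (he : m e e = e) (hf : m f f = f) :
    m (m e f) (m e f) = m e f := by
  have ha' : ∀ x y z : S, m (m x y) z = m x (m y z) := ha
  obtain ⟨x, ⟨hx1, hx2⟩, hxu⟩ := hI (m e f)
  have hx1' := hx1; have hx2' := hx2
  simp only [ha'] at hx1' hx2'
  -- hx1' : m e (m f (m x (m e f))) = m e f
  -- hx2' : m x (m e (m f x)) = x
  have key := congrArg (fun t => m t e) hx2'
  simp only [ha'] at key
  -- key : m x (m e (m f (m x e))) = m x e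
  have hfxe : m (m f x) e = x := by
    apply hxu
    constructor
    · simp only [ha']
      rw [show m f (m f (m x (m e (m e f)))) = m f (m x (m e (m e f))) from by
        rw [← ha, hf]]
      rw [show m e (m e f) = m e f from by rw [← ha, he]]
      exact hx1'
    · simp only [ha']
      rw [show m e (m e (m f (m f (m x e)))) = m e (m f (m f (m x e))) from by
        rw [← ha, he]]
      rw [show m f (m f (m x e)) = m f (m x e) from by rw [← ha, hf]]
      rw [key]
  have hxx : m x x = x := by
    conv_lhs => rw [← hfxe]
    simp only [ha']
    rw [key]
    simp only [ha'] at hfxe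
    exact hfxe
  obtain ⟨y, _, hyu⟩ := hI x
  have h1y : m e f = y := hyu _ ⟨hx2, hx1⟩
  have h2y : x = y := hyu x ⟨by rw [hxx]; exact hxx, by rw [hxx]; exact hxx⟩
  rw [h1y.trans h2y.symm]
  exact hxx

/-- In a regular *-semigroup in which projections commute,
every idempotent is a projection. -/
private lemma idem_is_proj {S : Type*} {m : S → S → S} {st : S → S}
    (hS : RegStar m st)
    (hc : ∀ e f : S, Proj m st e → Proj m st f → m e f = m f e)
    {e : S} (he : m e e = e) : Proj m st e := by
  obtain ⟨ha, h1, h2, h3⟩ := hS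
  have ha' : ∀ x y z : S, m (m x y) z = m x (m y z) := ha
  have hse : m (st e) (st e) = st e := by rw [← h3, he]
  -- p = e * st e is a projection
  have hp : Proj m st (m e (st e)) := by
    constructor
    · have := h1 (st e)
      rw [h2] at this
      -- this : m (m (st e) e) (st e) = st e
      simp only [ha'] at this ⊢
      rw [show m (st e) (m e (st e)) = st e from by simpa only [ha'] using this]
    · rw [h3, h2]
  -- q = st e * e is a projection
  have hq : Proj m st (m (st e) e) := by
    constructor
    · have := h1 e
      simp only [ha'] at this ⊢
      rw [show m e (m (st e) e) = e from by simpa only [ha'] using this]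
    · rw [h3, h2]
  -- e = p * q
  have hepq : m (m e (st e)) (m (st e) e) = e := by
    simp only [ha']
    rw [show m (st e) (m (st e) e) = m (st e) e from by rw [← ha, hse]]
    have := h1 e
    simpa only [ha'] using this
  refine ⟨he, ?_⟩
  calc st e = st (m (m e (st e)) (m (st e) e)) := by rw [hepq]
    _ = m (st (m (st e) e)) (st (m e (st e))) := h3 _ _
    _ = m (m (st e) e) (m e (st e)) := by rw [hq.2, hp.2]
    _ = m (m e (st e)) (m (st e) e) := hc _ _ hq hp
    _ = e := hepq

theorem stmt4 {S : Type*} (m : S → S → S) (st : S → S)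
    (hS : RegStar m st) :
    InverseSgp m ↔
      ∀ e f : S, Proj m st e → Proj m st f → m e f = m f e := by
  obtain ⟨ha, h1, h2, h3⟩ := hS
  have ha' : ∀ x y z : S, m (m x y) z = m x (m y z) := ha
  constructor
  · intro hI e f he hf
    have hef := inv_idem_mul ha hI he.1 hf.1
    have hfe := inv_idem_mul ha hI hf.1 he.1
    have hef' := hef; have hfe' := hfe
    simp only [ha'] at hef' hfe'
    -- hef' : m e (m f (m e f)) = m e f, hfe' : m f (m e (m f e)) = m f e
    obtain ⟨z, _, hzu⟩ := hI (m e f)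
    have hz1 : m f e = z := by
      apply hzu
      constructor
      · simp only [ha']
        rw [show m f (m f (m e (m e f))) = m f (m e (m e f)) from by rw [← ha, hf.1]]
        rw [show m e (m e f) = m e f from by rw [← ha, he.1]]
        exact hef'
      · simp only [ha']
        rw [show m e (m e (m f (m f e))) = m e (m f (m f e)) from by rw [← ha, he.1]]
        rw [show m f (m f e) = m f e from by rw [← ha, hf.1]]
        exact hfe'
    have hz2 : m e f = z := by
      apply hzu
      exact ⟨by rw [hef]; exact hef, by rw [hef]; exact hef⟩
    rw [hz2, hz1]
  · intro hc a
    have hcom : ∀ g h : S, m g g = g → m h h = h → m g h = m h g := by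
      intro g h hg hh
      exact hc g h (idem_is_proj ⟨ha, h1, h2, h3⟩ hc hg) (idem_is_proj ⟨ha, h1, h2, h3⟩ hc hh)
    set c := st a with hcdef
    have hc1 : m (m a c) a = a := h1 a
    have hc2 : m (m c a) c = c := by
      have := h1 (st a)
      rw [h2] at this
      exact this
    refine ⟨c, ⟨hc1, hc2⟩, ?_⟩
    rintro b ⟨hb1, hb2⟩
    have hc1' := hc1; have hc2' := hc2; have hb1' := hb1; have hb2' := hb2
    simp only [ha'] at hc1' hc2' hb1' hb2'
    -- hc1' : m a (m c a) = a, hc2' : m c (m a c) = c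
    -- hb1' : m a (m b a) = a, hb2' : m b (m a b) = b
    have red : ∀ X : S, m a (m c (m a X)) = m a X := by
      intro X
      have := congrArg (fun t => m t X) hc1
      simpa only [ha'] using this
    have red2 : ∀ X : S, m a (m b (m a X)) = m a X := by
      intro X
      have := congrArg (fun t => m t X) hb1
      simpa only [ha'] using this
    -- idempotents
    have iab : m (m a b) (m a b) = m a b := by
      have := congrArg (fun t => m a t) hb2
      simpa only [ha'] using this
    have iba : m (m b a) (m b a) = m b a := by
      have := congrArg (fun t => m t a) hb2'.symm
      simp only [ha'] at this
      simpa only [ha'] using this.symm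
    have iac : m (m a c) (m a c) = m a c := by
      have := congrArg (fun t => m a t) hc2
      simpa only [ha'] using this
    have ica : m (m c a) (m c a) = m c a := by
      have := congrArg (fun t => m t a) hc2'.symm
      simp only [ha'] at this
      simpa only [ha'] using this.symm
    have key1 := congrArg (fun t => m t b) (hcom _ _ iba ica)
    simp only [ha'] at key1
    -- key1 : m b (m a (m c (m a b))) = m c (m a (m b (m a b)))
    have key2 := congrArg (fun t => m c t) (hcom _ _ iab iac)
    simp only [ha'] at key2
    -- key2 : m c (m a (m b (m a c))) = m c (m a (m c (m a b)))
    have T1 : b = m c (m a b) := by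
      calc b = m b (m a b) := hb2'.symm
        _ = m b (m a (m c (m a b))) := by rw [red b]
        _ = m c (m a (m b (m a b))) := key1
        _ = m c (m a b) := by rw [hb2']
    have T2 : c = m c (m a b) := by
      calc c = m c (m a c) := hc2'.symm
        _ = m c (m a (m b (m a c))) := by rw [red2 c]
        _ = m c (m a (m c (m a b))) := key2
        _ = m c (m a b) := by rw [red b]
    exact T1.trans T2.symm
end

section
/- A regular *-semigroup S is locally inverse (i.e., eSe is an inverse semigroup for every idempotent e) if and only if efege = egefe for all projections e, f, g. -/
section RS6Aux

variable {S : Type*} [Semigroup S]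

private lemma RS6.extw {x y : S} (h : x = y) : ∀ w : S, x*w = y*w := fun w => by rw [h]

private lemma RS6.mx {x y z : S} (h : x*y = z) (w : S) : x*(y*w) = z*w := by
  rw [← mul_assoc, h]

private lemma RS6.memfix {e a x : S} (he : e*e = e) (hax : a = e*x*e) : e*a = a ∧ a*e = a := by
  subst hax
  have heW := RS6.extw he; simp only [mul_assoc] at heW
  exact ⟨by simp only [mul_assoc, heW], by simp only [mul_assoc, he]⟩

private lemma RS6.fourcomm {A B C D : S} (c11 : A*C = C*A) (c12 : A*D = D*A)
    (c21 : B*C = C*B) (c22 : B*D = D*B) :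
    (A*B)*(C*D) = (C*D)*(A*B) := by
  calc (A*B)*(C*D) = A*(B*C)*D := by simp only [mul_assoc]
  _ = A*(C*B)*D := by rw [c21]
  _ = (A*C)*(B*D) := by simp only [mul_assoc]
  _ = (C*A)*(D*B) := by rw [c11, c22]
  _ = C*(A*D)*B := by simp only [mul_assoc]
  _ = C*(D*A)*B := by rw [c12]
  _ = (C*D)*(A*B) := by simp only [mul_assoc]

variable (st : S → S)

private lemma RS6.fefe (h1 : ∀ x : S, x * st x * x = x) (h3 : ∀ x y : S, st (x*y) = st y * st x)
    {e f : S} (he : e*e = e) (hf : f*f = f) (hse : st e = e) (hsf : st f = f) :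
    f*(e*(f*e)) = f*e := by
  have h := h1 (f*e)
  rw [h3, hse, hsf] at h
  simp only [mul_assoc, RS6.mx he, RS6.mx hf] at h
  exact h

private lemma RS6.efe_idem (h1 : ∀ x : S, x * st x * x = x)
    (h3 : ∀ x y : S, st (x*y) = st y * st x)
    {e f : S} (he : e*e = e) (hf : f*f = f) (hse : st e = e) (hsf : st f = f) :
    (e*f*e)*(e*f*e) = e*f*e := by
  have h := RS6.fefe st h1 h3 he hf hse hsf
  simp only [mul_assoc, RS6.mx he]
  rw [h]

private lemma RS6.prod_idem {e u v : S}
    (H : ∀ a : S, (∃ x, a = e*x*e) → ∃! b, (∃ x, b = e*x*e) ∧ a*b*a = a ∧ b*a*b = b)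
    (he : e*e = e) (hu : u*u = u) (hv : v*v = v)
    (hue : u = e*u*e) (hve : v = e*v*e) : (u*v)*(u*v) = u*v := by
  obtain ⟨heu, hue'⟩ := RS6.memfix he hue
  obtain ⟨hev, hve'⟩ := RS6.memfix he hve
  have heuW := RS6.extw heu; simp only [mul_assoc] at heuW
  have huW := RS6.extw hu; simp only [mul_assoc] at huW
  have hvW := RS6.extw hv; simp only [mul_assoc] at hvW
  have memuv : ∃ x, u*v = e*x*e := ⟨u*v, by simp only [mul_assoc, heuW, hve']⟩
  obtain ⟨x, ⟨hxm, hx1, hx2⟩, hxu⟩ := H (u*v) memuv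
  obtain ⟨x0, hx0⟩ := hxm
  obtain ⟨hex, hxe⟩ := RS6.memfix he hx0
  have hx1N := hx1; have hx2N := hx2
  simp only [mul_assoc] at hx1N hx2N
  have hx1W := RS6.extw hx1; simp only [mul_assoc] at hx1W
  have hx2W := RS6.extw hx2; simp only [mul_assoc] at hx2W
  have hevW := RS6.extw hev; simp only [mul_assoc] at hevW
  have hmemvxu : ∃ y, v*x*u = e*y*e := ⟨v*x*u, by simp only [mul_assoc, hevW, hue']⟩
  have hinv1 : (u*v)*(v*x*u)*(u*v) = u*v := by
    simp only [mul_assoc, hvW, huW]; exact hx1N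
  have hinv2 : (v*x*u)*(u*v)*(v*x*u) = v*x*u := by
    simp only [mul_assoc, huW, hvW, hx2W]
  have hvxu : v*x*u = x := hxu (v*x*u) ⟨hmemvxu, hinv1, hinv2⟩
  have hxidem : x*x = x := by
    calc x*x = (v*x*u)*(v*x*u) := by rw [hvxu]
    _ = v*(x*u) := by simp only [mul_assoc, hx2W]
    _ = x := by rw [← mul_assoc]; exact hvxu
  obtain ⟨y, hy, hyu⟩ := H x ⟨x0, hx0⟩
  have hxW := RS6.extw hxidem; simp only [mul_assoc] at hxW
  have e1 : x = y := hyu x ⟨⟨x0, hx0⟩, by simp only [mul_assoc, hxW, hxidem],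
    by simp only [mul_assoc, hxW, hxidem]⟩
  have e2 : u*v = y := hyu (u*v) ⟨memuv, hx2, hx1⟩
  rw [e2, ← e1, hxidem]

private lemma RS6.comm_loc {e u v : S}
    (H : ∀ a : S, (∃ x, a = e*x*e) → ∃! b, (∃ x, b = e*x*e) ∧ a*b*a = a ∧ b*a*b = b)
    (he : e*e = e) (hu : u*u = u) (hv : v*v = v)
    (hue : u = e*u*e) (hve : v = e*v*e) : u*v = v*u := by
  obtain ⟨heu, hue'⟩ := RS6.memfix he hue
  obtain ⟨hev, hve'⟩ := RS6.memfix he hve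
  have heuW := RS6.extw heu; simp only [mul_assoc] at heuW
  have hevW := RS6.extw hev; simp only [mul_assoc] at hevW
  have huW := RS6.extw hu; simp only [mul_assoc] at huW
  have hvW := RS6.extw hv; simp only [mul_assoc] at hvW
  have huv := RS6.prod_idem H he hu hv hue hve
  have hvu := RS6.prod_idem H he hv hu hve hue
  have huvN := huv; simp only [mul_assoc] at huvN
  have hvuN := hvu; simp only [mul_assoc] at hvuN
  have memuv : ∃ x, u*v = e*x*e := ⟨u*v, by simp only [mul_assoc, heuW, hve']⟩
  have memvu : ∃ x, v*u = e*x*e := ⟨v*u, by simp only [mul_assoc, hevW, hue']⟩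
  obtain ⟨x, hxP, hxu⟩ := H (u*v) memuv
  have e1 : u*v = x := hxu (u*v) ⟨memuv, by simp only [mul_assoc, huvN],
    by simp only [mul_assoc, huvN]⟩
  have e2 : v*u = x := hxu (v*u) ⟨memvu,
    by simp only [mul_assoc, hvW, huW, huvN],
    by simp only [mul_assoc, huW, hvW, hvuN]⟩
  rw [e1, e2]

private lemma RS6.projcomm
    (hP : ∀ e f g : S, (e*e = e ∧ st e = e) → (f*f = f ∧ st f = f) → (g*g = g ∧ st g = g) →
      e*f*e*g*e = e*g*e*f*e)
    {p q r : S} (hp : p*p = p ∧ st p = p) (hq : q*q = q ∧ st q = q) (hr : r*r = r ∧ st r = r)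
    (hpq : p*q = q) (hqp : q*p = q) (hpr : p*r = r) (hrp : r*p = r) :
    q*r = r*q := by
  have h := hP p q r hp hq hr
  rw [hpq, hqp, hpr, hrp, mul_assoc, hrp, mul_assoc, hqp] at h
  exact h

private lemma RS6.idemcomm
    (h1 : ∀ x : S, x * st x * x = x) (h2 : ∀ x : S, st (st x) = x)
    (h3 : ∀ x y : S, st (x*y) = st y * st x)
    (hP : ∀ e f g : S, (e*e = e ∧ st e = e) → (f*f = f ∧ st f = f) → (g*g = g ∧ st g = g) →
      e*f*e*g*e = e*g*e*f*e)
    {p u v : S} (hp : p*p = p ∧ st p = p)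
    (hu : u*u = u) (hpu : p*u = u) (hup : u*p = u)
    (hv : v*v = v) (hpv : p*v = v) (hvp : v*p = v) :
    u*v = v*u := by
  have hsu : st u * st u = st u := by rw [← h3, hu]
  have hsv : st v * st v = st v := by rw [← h3, hv]
  have hsup : st u * p = st u := by rw [← hp.2, ← h3, hpu]
  have hpsu : p * st u = st u := by
    have : st (u * p) = st u := by rw [hup]
    rwa [h3, hp.2] at this
  have hsvp : st v * p = st v := by rw [← hp.2, ← h3, hpv]
  have hpsv : p * st v = st v := by
    have : st (v * p) = st v := by rw [hvp]
    rwa [h3, hp.2] at this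
  have pjgen : ∀ x : S, (x*st x)*(x*st x) = x*st x ∧ st (x*st x) = x*st x := by
    intro x
    constructor
    · have h := h1 (st x); rw [h2] at h
      simp only [mul_assoc] at h ⊢
      rw [h]
    · rw [h3, h2]
  have pq1 := pjgen u
  have pr1 := pjgen v
  have pq2 : (st u*u)*(st u*u) = st u*u ∧ st (st u*u) = st u*u := by
    have h := pjgen (st u); rw [h2] at h; exact h
  have pr2 : (st v*v)*(st v*v) = st v*v ∧ st (st v*v) = st v*v := by
    have h := pjgen (st v); rw [h2] at h; exact h
  have hpq1 : p*(u*st u) = (u*st u) := by rw [← mul_assoc, hpu]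
  have hq1p : (u*st u)*p = (u*st u) := by rw [mul_assoc, hsup]
  have hpq2 : p*(st u*u) = (st u*u) := by rw [← mul_assoc, hpsu]
  have hq2p : (st u*u)*p = (st u*u) := by rw [mul_assoc, hup]
  have hpr1 : p*(v*st v) = (v*st v) := by rw [← mul_assoc, hpv]
  have hr1p : (v*st v)*p = (v*st v) := by rw [mul_assoc, hsvp]
  have hpr2 : p*(st v*v) = (st v*v) := by rw [← mul_assoc, hpsv]
  have hr2p : (st v*v)*p = (st v*v) := by rw [mul_assoc, hvp]
  have hud : (u*st u)*(st u*u) = u := by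
    rw [mul_assoc, ← mul_assoc (st u), hsu, ← mul_assoc, h1]
  have hvd : (v*st v)*(st v*v) = v := by
    rw [mul_assoc, ← mul_assoc (st v), hsv, ← mul_assoc, h1]
  have c11 : (u*st u)*(v*st v) = (v*st v)*(u*st u) :=
    RS6.projcomm st hP hp pq1 pr1 hpq1 hq1p hpr1 hr1p
  have c12 : (u*st u)*(st v*v) = (st v*v)*(u*st u) :=
    RS6.projcomm st hP hp pq1 pr2 hpq1 hq1p hpr2 hr2p
  have c21 : (st u*u)*(v*st v) = (v*st v)*(st u*u) :=
    RS6.projcomm st hP hp pq2 pr1 hpq2 hq2p hpr1 hr1p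
  have c22 : (st u*u)*(st v*v) = (st v*v)*(st u*u) :=
    RS6.projcomm st hP hp pq2 pr2 hpq2 hq2p hpr2 hr2p
  calc u*v = ((u*st u)*(st u*u))*((v*st v)*(st v*v)) := by rw [hud, hvd]
    _ = ((v*st v)*(st v*v))*((u*st u)*(st u*u)) := RS6.fourcomm c11 c12 c21 c22
    _ = v*u := by rw [hud, hvd]

private lemma RS6.exinv (h1 : ∀ x : S, x * st x * x = x) (h2 : ∀ x : S, st (st x) = x)
    {e a : S} (hea : e*a = a) (hae : a*e = a) :
    a*(e*st a*e)*a = a ∧ (e*st a*e)*a*(e*st a*e) = e*st a*e := by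
  have haeW := RS6.extw hae; simp only [mul_assoc] at haeW
  have heaW := RS6.extw hea; simp only [mul_assoc] at heaW
  have h1N := h1 a; simp only [mul_assoc] at h1N
  have it := h1 (st a); rw [h2] at it
  have itW := RS6.extw it; simp only [mul_assoc] at itW
  constructor
  · simp only [mul_assoc, haeW, hea, h1N]
  · simp only [mul_assoc, heaW, haeW, itW]

private lemma RS6.locinv_proj
    (h1 : ∀ x : S, x * st x * x = x) (h2 : ∀ x : S, st (st x) = x)
    (h3 : ∀ x y : S, st (x*y) = st y * st x)
    (hP : ∀ e f g : S, (e*e = e ∧ st e = e) → (f*f = f ∧ st f = f) → (g*g = g ∧ st g = g) →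
      e*f*e*g*e = e*g*e*f*e)
    {p : S} (hp : p*p = p ∧ st p = p) :
    ∀ a : S, (∃ x, a = p*x*p) → ∃! b, (∃ x, b = p*x*p) ∧ a*b*a = a ∧ b*a*b = b := by
  intro a ha
  obtain ⟨x0, hx0⟩ := ha
  obtain ⟨hpa, hap⟩ := RS6.memfix hp.1 hx0
  have key : ∀ b c : S, (∃ x, b = p*x*p) → (∃ x, c = p*x*p) →
      a*b*a = a → b*a*b = b → a*c*a = a → c*a*c = c → b = c := by
    rintro b c ⟨xb, hxb⟩ ⟨xc, hxc⟩ hb1 hb2 hc1 hc2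
    obtain ⟨hpb, hbp⟩ := RS6.memfix hp.1 hxb
    obtain ⟨hpc, hcp⟩ := RS6.memfix hp.1 hxc
    have hb1N := hb1; simp only [mul_assoc] at hb1N
    have iab : (a*b)*(a*b) = a*b := by simpa only [mul_assoc] using RS6.extw hb1 b
    have iac : (a*c)*(a*c) = a*c := by simpa only [mul_assoc] using RS6.extw hc1 c
    have iba : (b*a)*(b*a) = b*a := by
      simpa only [mul_assoc] using congrArg (fun z => b*z) hb1
    have ica : (c*a)*(c*a) = c*a := by
      simpa only [mul_assoc] using congrArg (fun z => c*z) hc1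
    have pab : p*(a*b) = a*b := by rw [← mul_assoc, hpa]
    have abp : (a*b)*p = a*b := by rw [mul_assoc, hbp]
    have pac : p*(a*c) = a*c := by rw [← mul_assoc, hpa]
    have acp : (a*c)*p = a*c := by rw [mul_assoc, hcp]
    have pba : p*(b*a) = b*a := by rw [← mul_assoc, hpb]
    have bap : (b*a)*p = b*a := by rw [mul_assoc, hap]
    have pca : p*(c*a) = c*a := by rw [← mul_assoc, hpc]
    have cap : (c*a)*p = c*a := by rw [mul_assoc, hap]
    have comm1 : (a*b)*(a*c) = (a*c)*(a*b) :=
      RS6.idemcomm st h1 h2 h3 hP hp iab pab abp iac pac acp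
    have comm2 : (b*a)*(c*a) = (c*a)*(b*a) :=
      RS6.idemcomm st h1 h2 h3 hP hp iba pba bap ica pca cap
    have hab2 : (a*c)*(a*b) = a*b := by rw [← mul_assoc, hc1]
    have hbab : b*(a*b) = b := by rw [← mul_assoc, hb2]
    have hbc : b = (b*a)*c := by
      calc b = b*(a*b) := by rw [← mul_assoc, hb2]
      _ = b*((a*c)*(a*b)) := by rw [hab2]
      _ = b*((a*b)*(a*c)) := by rw [comm1]
      _ = (b*(a*b))*(a*c) := by rw [← mul_assoc]
      _ = b*(a*c) := by rw [hbab]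
      _ = (b*a)*c := by rw [← mul_assoc]
    have k1 : (c*a)*(b*a) = c*a := by
      simp only [mul_assoc, hb1N]
    have hcc : c = (b*a)*c := by
      calc c = (c*a)*c := by rw [hc2]
      _ = ((c*a)*(b*a))*c := by rw [k1]
      _ = ((b*a)*(c*a))*c := by rw [comm2]
      _ = (b*a)*((c*a)*c) := by rw [mul_assoc]
      _ = (b*a)*c := by rw [show (c*a)*c = c from hc2]
    rw [hbc, ← hcc]
  obtain ⟨e1, e2⟩ := RS6.exinv st h1 h2 hpa hap
  exact ⟨p*st a*p, ⟨⟨st a, rfl⟩, e1, e2⟩,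
    fun b hb => key b (p*st a*p) hb.1 ⟨st a, rfl⟩ hb.2.1 hb.2.2 e1 e2⟩

private lemma RS6.transfer {p e : S} (he : e*e = e) (hp : p*p = p) (hpe : p*e = e)
    (hep : e*p = p) (hq : ∃ q, p*q = e)
    (hploc : ∀ A : S, (∃ x, A = p*x*p) → ∃! B, (∃ x, B = p*x*p) ∧ A*B*A = A ∧ B*A*B = B) :
    ∀ a : S, (∃ x, a = e*x*e) → ∃! b, (∃ x, b = e*x*e) ∧ a*b*a = a ∧ b*a*b = b := by
  intro a ha
  obtain ⟨x0, hx0⟩ := ha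
  obtain ⟨hea, hae⟩ := RS6.memfix he hx0
  obtain ⟨q, hpq⟩ := hq
  have haeW := RS6.extw hae; simp only [mul_assoc] at haeW
  have heaW := RS6.extw hea; simp only [mul_assoc] at heaW
  have hpa : p*a = a := by rw [← hea, ← mul_assoc, hpe]
  have hpaW := RS6.extw hpa; simp only [mul_assoc] at hpaW
  have memA : ∃ x : S, a*p = p*x*p := ⟨a, by rw [hpa]⟩
  obtain ⟨B, ⟨⟨xB, hxB⟩, hB1, hB2⟩, hBu⟩ := hploc (a*p) memA
  obtain ⟨hpB, hBp⟩ := RS6.memfix hp hxB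
  have hpBW := RS6.extw hpB; simp only [mul_assoc] at hpBW
  have heB : e*B = B := by rw [← hpB, ← mul_assoc, hep]
  have heBW := RS6.extw heB; simp only [mul_assoc] at heBW
  have t : a*(B*(a*p)) = a*p := by
    have t0 := hB1; simp only [mul_assoc, hpBW] at t0; exact t0
  have haBa : a*B*a = a := by
    calc a*B*a = a*B*(a*e) := by rw [hae]
    _ = a*B*(a*(p*q)) := by rw [hpq]
    _ = (a*(B*(a*p)))*q := by simp only [mul_assoc]
    _ = (a*p)*q := by rw [t]
    _ = a*(p*q) := by rw [mul_assoc]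
    _ = a*e := by rw [hpq]
    _ = a := hae
  have haBaN := haBa; simp only [mul_assoc] at haBaN
  have hBaB : B*(a*B) = B := by
    have t0 := hB2; simp only [mul_assoc, hpB] at t0; exact t0
  have hBaBW := RS6.extw hBaB; simp only [mul_assoc] at hBaBW
  refine ⟨e*B*e, ⟨⟨B, rfl⟩, ?_, ?_⟩, ?_⟩
  · simp only [mul_assoc, haeW, hea, haBaN]
  · simp only [mul_assoc, heaW, haeW, heBW, hBaBW]
  · rintro b' ⟨⟨x', hx'⟩, ha1, ha2⟩
    obtain ⟨heb', hb'e⟩ := RS6.memfix he hx'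
    have hpb' : p*b' = b' := by rw [← heb', ← mul_assoc, hpe]
    have hpb'W := RS6.extw hpb'; simp only [mul_assoc] at hpb'W
    have memB' : ∃ x : S, b'*p = p*x*p := ⟨b', by rw [hpb']⟩
    have ha1N := ha1; simp only [mul_assoc] at ha1N
    have ha2N := ha2; simp only [mul_assoc] at ha2N
    have ha1NW := RS6.extw ha1N; simp only [mul_assoc] at ha1NW
    have ha2NW := RS6.extw ha2N; simp only [mul_assoc] at ha2NW
    have inv1 : (a*p)*(b'*p)*(a*p) = a*p := by
      simp only [mul_assoc, hpb'W, hpaW, ha1NW]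
    have inv2 : (b'*p)*(a*p)*(b'*p) = b'*p := by
      simp only [mul_assoc, hpaW, hpb'W, ha2NW]
    have hBub' : b'*p = B := hBu (b'*p) ⟨memB', inv1, inv2⟩
    calc b' = (b'*p)*e := by rw [mul_assoc, hpe, hb'e]
    _ = B*e := by rw [hBub']
    _ = e*B*e := by rw [heB]

private lemma RS6.locinv_all
    (h1 : ∀ x : S, x * st x * x = x) (h2 : ∀ x : S, st (st x) = x)
    (h3 : ∀ x y : S, st (x*y) = st y * st x)
    (hP : ∀ e f g : S, (e*e = e ∧ st e = e) → (f*f = f ∧ st f = f) → (g*g = g ∧ st g = g) →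
      e*f*e*g*e = e*g*e*f*e) :
    ∀ e : S, e*e = e → ∀ a : S, (∃ x, a = e*x*e) →
      ∃! b, (∃ x, b = e*x*e) ∧ a*b*a = a ∧ b*a*b = b := by
  intro e he
  have hse : st e * st e = st e := by rw [← h3, he]
  have hseW := RS6.extw hse; simp only [mul_assoc] at hseW
  have it := h1 (st e); rw [h2] at it
  have itN := it; simp only [mul_assoc] at itN
  have hp1 : (e*st e)*(e*st e) = e*st e := by simp only [mul_assoc]; rw [itN]
  have hp2 : st (e*st e) = e*st e := by rw [h3, h2]
  have hpe : (e*st e)*e = e := h1 e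
  have hep : e*(e*st e) = e*st e := by rw [← mul_assoc, he]
  have h1eN := h1 e; simp only [mul_assoc] at h1eN
  have hq : ∃ q : S, (e*st e)*q = e := ⟨st e*e, by simp only [mul_assoc, hseW, h1eN]⟩
  exact RS6.transfer he hp1 hpe hep hq (RS6.locinv_proj st h1 h2 h3 hP ⟨hp1, hp2⟩)

end RS6Aux

theorem stmt6 {S : Type*} (m : S → S → S) (st : S → S)
    (hS : RegStar m st) :
    LocallyInverse m ↔
      ∀ e f g : S, Proj m st e → Proj m st f → Proj m st g →
        m (m (m (m e f) e) g) e = m (m (m (m e g) e) f) e := by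
  obtain ⟨hA, h1, h2, h3⟩ := hS
  letI : Semigroup S := { mul := m, mul_assoc := hA }
  have h1' : ∀ x : S, x * st x * x = x := h1
  have h2' : ∀ x : S, st (st x) = x := h2
  have h3' : ∀ x y : S, st (x*y) = st y * st x := h3
  constructor
  · intro hL e f g he hf hg
    have he1 : e*e = e := he.1
    have hu : ((e*f*e) : S)*(e*f*e) = e*f*e := RS6.efe_idem st h1' h3' he.1 hf.1 he.2 hf.2
    have hv : ((e*g*e) : S)*(e*g*e) = e*g*e := RS6.efe_idem st h1' h3' he.1 hg.1 he.2 hg.2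
    have heW := RS6.extw he1; simp only [mul_assoc] at heW
    have hue : (e*f*e : S) = e*(e*f*e)*e := by simp only [mul_assoc, heW, he1]
    have hve : (e*g*e : S) = e*(e*g*e)*e := by simp only [mul_assoc, heW, he1]
    have H : ∀ a : S, (∃ x, a = e*x*e) →
        ∃! b, (∃ x, b = e*x*e) ∧ a*b*a = a ∧ b*a*b = b := hL e he.1
    have hc : (e*f*e : S)*(e*g*e) = (e*g*e)*(e*f*e) := RS6.comm_loc H he1 hu hv hue hve
    show (e*f*e*g*e : S) = e*g*e*f*e
    have l : (e*f*e*g*e : S) = (e*f*e)*(e*g*e) := by simp only [mul_assoc, heW]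
    have r : (e*g*e*f*e : S) = (e*g*e)*(e*f*e) := by simp only [mul_assoc, heW]
    rw [l, hc, ← r]
  · intro hP'
    have hP : ∀ e f g : S, (e*e = e ∧ st e = e) → (f*f = f ∧ st f = f) →
        (g*g = g ∧ st g = g) → e*f*e*g*e = e*g*e*f*e := fun e f g a b c => hP' e f g a b c
    intro e he a ha
    exact RS6.locinv_all st h1' h2' h3' hP e he a ha
end

section
/- A regular *-semigroup is both completely regular and locally inverse if and only if it satisfies the identity xx*y*yxy = xy for all x, y. -/
theorem stmt7 {S : Type*} (m : S → S → S) (st : S → S)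
    (hS : RegStar m st) :
    (CompletelyRegular m ∧ LocallyInverse m) ↔
      ∀ x y : S, m (m (m (m (m x (st x)) (st y)) y) x) y = m x y := by
  obtain ⟨hA0, hinv, hss, hstm⟩ := hS
  have hA : ∀ a b c : S, m (m a b) c = m a (m b c) := hA0
  have cont : ∀ a b c : S, m a b = c → ∀ t, m a (m b t) = m c t := fun a b c h t => by
    rw [← hA, h]
  have cont' : ∀ a b c d : S, m a b = m c d → ∀ t, m a (m b t) = m c (m d t) :=
    fun a b c d h t => by rw [← hA, h, hA]
  have hinv' : ∀ x, m x (m (st x) x) = x := fun x => by rw [← hA]; exact hinv x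
  have hinvc : ∀ x t, m x (m (st x) (m x t)) = m x t := fun x t => by
    rw [← hA, ← hA, hinv]
  have hB1 : ∀ x, m (st x) (m x (st x)) = st x := fun x => by
    have h := hinv' (st x); rwa [hss] at h
  have hB1c : ∀ x t, m (st x) (m x (m (st x) t)) = m (st x) t := fun x t => by
    have h := hinvc (st x) t; rwa [hss] at h
  have hstse : ∀ x, st (m x (st x)) = m x (st x) := fun x => by rw [hstm, hss]
  have hstss : ∀ x, st (m (st x) x) = m (st x) x := fun x => by rw [hstm, hss]
  have hidemst : ∀ u, m u u = u → m (st u) (st u) = st u := fun u h => by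
    have h2 := congrArg st h; rwa [hstm] at h2
  constructor
  · rintro ⟨hCR, hLI⟩
    -- local commutation from unique local inverses
    have localcomm : ∀ q, m q q = q → ∀ u v, (∃ z, u = m (m q z) q) → m u u = u →
        (∃ z, v = m (m q z) q) → m v v = v → m u v = m v u := by
      intro q hq2
      have hqe : ∀ a, (∃ z, a = m (m q z) q) → m q a = a ∧ m a q = a := by
        rintro a ⟨z, rfl⟩
        constructor
        · have h : m q (m q z) = m q z := by rw [← hA, hq2]
          rw [← hA, h]
        · rw [hA, hq2]
      have hfmul : ∀ a b, (∃ z, a = m (m q z) q) → (∃ z, b = m (m q z) q) →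
          ∃ z, m a b = m (m q z) q := by
        intro a b ha hb
        obtain ⟨hqa, haq⟩ := hqe a ha
        obtain ⟨z2, rfl⟩ := hb
        refine ⟨m (m a q) z2, ?_⟩
        simp only [← hA]
        rw [hqa]
      have step : ∀ u v, (∃ z, u = m (m q z) q) → m u u = u →
          (∃ z, v = m (m q z) q) → m v v = v → m (m u v) (m u v) = m u v := by
        intro u v hfu hu2 hfv hv2
        obtain ⟨b, ⟨hbf, hub, hbub⟩, huniq⟩ := hLI q hq2 (m u v) (hfmul u v hfu hfv)
        have hu2c := cont u u u hu2
        have hv2c := cont v v v hv2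
        have hub' : m u (m v (m b (m u v))) = m u v := by
          have h := hub; simp only [hA] at h; exact h
        have hbub0 : m b (m u (m v b)) = b := by
          have h := hbub; simp only [hA] at h; exact h
        have hbub' : ∀ t, m b (m u (m v (m b t))) = m b t := fun t => by
          have h := cont b (m u (m v b)) b hbub0 t
          simp only [hA] at h
          exact h
        have hwP1 : m (m (m u v) (m (m v b) u)) (m u v) = m u v := by
          simp only [hA, hv2c, hu2c]
          exact hub'
        have hwP2 : m (m (m (m v b) u) (m u v)) (m (m v b) u) = m (m v b) u := by
          simp only [hA, hu2c, hv2c, hbub']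
        have hwb := huniq (m (m v b) u)
          ⟨hfmul (m v b) u (hfmul v b hfv hbf) hfu, hwP1, hwP2⟩
        have hb2 : m b b = b := by
          have h1 : m (m (m v b) u) (m (m v b) u) = b := by
            simp only [hA, hbub']
            have h := hwb; simp only [hA] at h; exact h
          calc m b b = m (m (m v b) u) (m (m v b) u) := by rw [hwb]
            _ = b := h1
        obtain ⟨b2, hb2P, huniq2⟩ := hLI q hq2 b hbf
        have h_b_inv : b = b2 := huniq2 b ⟨hbf, by rw [hb2, hb2], by rw [hb2, hb2]⟩
        have h_uv_inv : m u v = b2 := huniq2 (m u v) ⟨hfmul u v hfu hfv, hbub, hub⟩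
        have huvb : m u v = b := by rw [h_uv_inv, ← h_b_inv]
        rw [huvb]; exact hb2
      intro u v hfu hu2 hfv hv2
      have huv2 := step u v hfu hu2 hfv hv2
      have hvu2 := step v u hfv hv2 hfu hu2
      have hu2c := cont u u u hu2
      have hv2c := cont v v v hv2
      obtain ⟨b3, hP3, huniq3⟩ := hLI q hq2 (m u v) (hfmul u v hfu hfv)
      have h1 : m u v = b3 := huniq3 (m u v)
        ⟨hfmul u v hfu hfv, by rw [huv2, huv2], by rw [huv2, huv2]⟩
      have h2 : m v u = b3 := by
        refine huniq3 (m v u) ⟨hfmul v u hfv hfu, ?_, ?_⟩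
        · simp only [hA, hu2c, hv2c]
          have h := huv2; simp only [hA] at h; exact h
        · simp only [hA, hu2c, hv2c]
          have h := hvu2; simp only [hA] at h; exact h
      rw [h1, h2]
    -- q e = (st e) e  when e q = e
    have loc2 : ∀ q e, m q q = q → st q = q → m e e = e → m e q = e → m q e = m (st e) e := by
      intro q e hq2 hqs he2 heq
      have hFs : st (m (st e) e) = m (st e) e := hstss e
      have hF2 : m (m (st e) e) (m (st e) e) = m (st e) e := by
        rw [hA]; exact congrArg (m (st e)) (hinv' e)
      have hFq : m (m (st e) e) q = m (st e) e := by rw [hA, heq]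
      have hqF : m q (m (st e) e) = m (st e) e := by
        have h := congrArg st hFq
        rw [hstm, hFs, hqs] at h
        exact h
      have hc := cont e q e heq
      have hk2 : m (m q e) (m q e) = m q e := by
        rw [hA, hc, he2]
      have hkform : ∃ z, m q e = m (m q z) q := ⟨e, by rw [hA, heq]⟩
      have hFform : ∃ z, m (st e) e = m (m q z) q := ⟨m (st e) e, by rw [hqF, hFq]⟩
      have hcomm := localcomm q hq2 (m q e) (m (st e) e) hkform hk2 hFform hF2
      have h1 : m (m q e) (m (st e) e) = m q e := by
        rw [hA, hinv']
      have h2 : m (m (st e) e) (m q e) = m (st e) e := by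
        rw [hA, hc, he2]
      rw [← h1, hcomm, h2]
    -- dagger
    have dag : ∀ p q e, m p p = p → st p = p → m q q = q → st q = q → m e e = e →
        m p e = e → m e q = e → m p (m q e) = e := by
      intro p q e hp2 hps hq2 hqs he2 hpe heq
      have h1 : m q e = m (st e) e := loc2 q e hq2 hqs he2 heq
      have hsep : m (st e) p = st e := by
        have h := congrArg st hpe
        rwa [hstm, hps] at h
      have hste2 : m (st e) (st e) = st e := by
        have h := congrArg st he2; rwa [hstm] at h
      have h2 : m p (st e) = m e (st e) := by
        have h := loc2 p (st e) hp2 hps hste2 hsep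
        rwa [hss] at h
      calc m p (m q e) = m p (m (st e) e) := by rw [h1]
        _ = m (m p (st e)) e := by rw [← hA]
        _ = m (m e (st e)) e := by rw [h2]
        _ = e := hinv e
    -- group-like identities from complete regularity
    have hgrp : ∀ c, ∃ e y, m e e = e ∧ m e c = c ∧ m c e = c ∧ m c y = e ∧ m y c = e := by
      intro c
      obtain ⟨hL, hR⟩ := hCR c
      have hu : ∃ u, c = m u (m c c) := by
        rcases hL with h | ⟨u, v, h1, h2⟩
        · exact ⟨c, by rw [← h, ← h]⟩
        · exact ⟨u, h1⟩
      have hw : ∃ w, c = m (m c c) w := by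
        rcases hR with h | ⟨u, v, h1, h2⟩
        · exact ⟨c, by rw [← h, ← h]⟩
        · exact ⟨u, h1⟩
      obtain ⟨u, hu⟩ := hu
      obtain ⟨w, hw⟩ := hw
      have hcwc : m c (m w c) = c := by
        have e1 : m (m u (m c c)) (m w c) = m u (m (m (m c c) w) c) := by simp only [hA]
        calc m c (m w c) = m (m u (m c c)) (m w c) := by rw [← hu]
          _ = m u (m (m (m c c) w) c) := e1
          _ = m u (m c c) := by rw [← hw]
          _ = c := hu.symm
      have hcwcc : ∀ t, m c (m w (m c t)) = m c t := by
        intro t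
        have h := cont c (m w c) c hcwc t
        simp only [hA] at h
        exact h
      have he2 : m (m c w) (m c w) = m c w := by
        rw [hA, hcwcc w]
      have hec : m (m c w) c = c := by rw [hA]; exact hcwc
      have hce : m c (m c w) = c := by rw [← hA, ← hw]
      have hcec := cont c (m c w) c hce
      have hcr : m c (m (m c w) (m w (m c w))) = m c w := by
        rw [hcec, hcwcc w]
      have hu1cc : m (m (m c w) (m u (m c w))) (m c c) = c := by
        have hecc : m (m c w) (m c c) = m c c := by rw [← hA, hec]
        calc m (m (m c w) (m u (m c w))) (m c c)
            = m (m c w) (m u (m (m c w) (m c c))) := by simp only [hA]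
          _ = m (m c w) (m u (m c c)) := by rw [hecc]
          _ = m (m c w) c := by rw [← hu]
          _ = c := hec
      have hu1c : m (m (m c w) (m u (m c w))) c = m c w := by
        have hA1 : m (m (m (m c w) (m u (m c w))) (m c c)) (m (m c w) (m w (m c w))) = m c w := by
          rw [hu1cc]
          exact hcr
        have hA2 : m (m (m (m c w) (m u (m c w))) (m c c)) (m (m c w) (m w (m c w))) =
            m (m (m c w) (m u (m c w))) c := by
          calc m (m (m (m c w) (m u (m c w))) (m c c)) (m (m c w) (m w (m c w)))
              = m (m (m c w) (m u (m c w))) (m c (m c (m (m c w) (m w (m c w))))) := by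
                simp only [hA]
            _ = m (m (m c w) (m u (m c w))) (m c (m c w)) := by rw [hcr]
            _ = m (m (m c w) (m u (m c w))) c := by rw [hce]
        exact hA2.symm.trans hA1
      have heR : m (m c w) (m (m c w) (m w (m c w))) = m (m c w) (m w (m c w)) := by
        rw [← hA, he2]
      have hu1e : m (m (m c w) (m u (m c w))) (m c w) = m (m c w) (m u (m c w)) := by
        calc m (m (m c w) (m u (m c w))) (m c w)
            = m (m c w) (m u (m (m c w) (m c w))) := by simp only [hA]
          _ = m (m c w) (m u (m c w)) := by rw [he2]
      have hRu1 : m (m c w) (m w (m c w)) = m (m c w) (m u (m c w)) := by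
        calc m (m c w) (m w (m c w))
            = m (m c w) (m (m c w) (m w (m c w))) := heR.symm
          _ = m (m (m (m c w) (m u (m c w))) c) (m (m c w) (m w (m c w))) := by rw [hu1c]
          _ = m (m (m c w) (m u (m c w))) (m c (m (m c w) (m w (m c w)))) := by simp only [hA]
          _ = m (m (m c w) (m u (m c w))) (m c w) := by rw [hcr]
          _ = m (m c w) (m u (m c w)) := hu1e
      have hyc : m (m (m c w) (m w (m c w))) c = m c w := by rw [hRu1]; exact hu1c
      exact ⟨m c w, m (m c w) (m w (m c w)), he2, hec, hce, hcr, hyc⟩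
    -- final
    intro x y
    obtain ⟨e, yy, he2, hec, hce, hcy, hyc⟩ := hgrp (m x y)
    have hp2 : m (m x (st x)) (m x (st x)) = m x (st x) := by
      rw [hA]; exact congrArg (m x) (hB1 x)
    have hps : st (m x (st x)) = m x (st x) := hstse x
    have hq2 : m (m (st y) y) (m (st y) y) = m (st y) y := by
      rw [hA]; exact congrArg (m (st y)) (hinv' y)
    have hqs : st (m (st y) y) = m (st y) y := hstss y
    have hpc : m (m x (st x)) (m x y) = m x y := by
      rw [hA, hinvc]
    have hcq : m (m x y) (m (st y) y) = m x y := by rw [hA, hinv']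
    have hpe : m (m x (st x)) e = e := by rw [← hcy, ← hA, hpc]
    have heq : m e (m (st y) y) = e := by rw [← hyc, hA, hcq]
    have hkey := dag (m x (st x)) (m (st y) y) e hp2 hps hq2 hqs he2 hpe heq
    calc m (m (m (m (m x (st x)) (st y)) y) x) y
        = m (m x (st x)) (m (m (st y) y) (m x y)) := by simp only [hA]
      _ = m (m x (st x)) (m (m (st y) y) (m e (m x y))) := by rw [hec]
      _ = m (m (m x (st x)) (m (m (st y) y) e)) (m x y) := by simp only [hA]
      _ = m e (m x y) := by rw [hkey]
      _ = m x y := hec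
  · intro hI
    have Ir : ∀ x y, m x (m (st x) (m (st y) (m y (m x y)))) = m x y := by
      intro x y
      have h := hI x y
      simp only [hA] at h
      exact h
    have BI' : ∀ a b, m a (m b (m a (m (st a) (m (st b) b)))) = m a b := by
      intro a b
      have h := congrArg st (Ir (st b) (st a))
      simp only [hstm, hss, hA] at h
      exact h
    have BC : ∀ x q, m q q = q → st q = q → m x (m q (m x (m (st x) q))) = m x q := by
      intro x q hq2 hqs
      have h := BI' x q
      rw [hqs, hq2] at h
      exact h
    have BL2 : ∀ w q, m w w = w → m q q = q → st q = q → m w q = w →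
        m q w = m (st w) w := by
      intro w q hw2 hq2 hqs hwq
      have hE1 : m w (m (st w) q) = w := by
        have h := BC w q hq2 hqs
        rw [hwq] at h
        have hwqc := cont w q w hwq
        rw [hwqc] at h
        have hw2c := cont w w w hw2
        rw [hw2c] at h
        exact h
      have hE1s : m q (m w (st w)) = st w := by
        have h := congrArg st hE1
        simp only [hstm, hss, hqs, hA] at h
        exact h
      calc m q w = m q (m w (m (st w) w)) := by rw [hinv']
        _ = m (m q (m w (st w))) w := by simp only [hA]
        _ = m (st w) w := by rw [hE1s]
    have BPCOMM : ∀ g α β, m g g = g → m α α = α → st α = α → m β β = β → st β = β →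
        m g α = α → m α g = α → m g β = β → m β g = β → m α β = m β α := by
      intro g α β hg2 hα2 hαs hβ2 hβs hgα hαg hgβ hβg
      have hαgs : m α (st g) = α := by
        have h := congrArg st hgα; rwa [hstm, hαs] at h
      have hgsα : m (st g) α = α := by
        have h := congrArg st hαg; rwa [hstm, hαs] at h
      have hβgs : m β (st g) = β := by
        have h := congrArg st hgβ; rwa [hstm, hβs] at h
      have hgsβ : m (st g) β = β := by
        have h := congrArg st hβg; rwa [hstm, hβs] at h
      have hπ2 : m (m g (st g)) (m g (st g)) = m g (st g) := by
        rw [hA]; exact congrArg (m g) (hB1 g)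
      have hπs : st (m g (st g)) = m g (st g) := hstse g
      have hαπ : m α (m g (st g)) = α := by rw [← hA, hαg, hαgs]
      have hπα : m (m g (st g)) α = α := by rw [hA, hgsα, hgα]
      have hβπ : m β (m g (st g)) = β := by rw [← hA, hβg, hβgs]
      have hw2 : m (m α β) (m α β) = m α β := by
        have h := Ir α β
        rw [hαs, hβs] at h
        have hα2c := cont α α α hα2
        have hβ2c := cont β β β hβ2
        rw [hα2c, hβ2c] at h
        simp only [hA]
        exact h
      have hwπ : m (m α β) (m g (st g)) = m α β := by rw [hA, hβπ]
      have hπw : m (m g (st g)) (m α β) = m α β := by rw [← hA, hπα]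
      have hL2 := BL2 (m α β) (m g (st g)) hw2 hπ2 hπs hwπ
      have hws : m (st (m α β)) (m α β) = m α β := by rw [← hL2, hπw]
      have hwsym : st (m α β) = m α β := by
        conv_lhs => rw [← hws]
        rw [hstm, hss, hws]
      have h1 : st (m α β) = m β α := by rw [hstm, hαs, hβs]
      rw [← h1, hwsym]
    have BCOMMproj : ∀ p u v, m p p = p → st p = p → m u u = u → m v v = v →
        m p u = u → m u p = u → m p v = v → m v p = v → m u v = m v u := by
      intro p u v hp2 hps hu2 hv2 hpu hup hpv hvp
      have hu2s := hidemst u hu2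
      have hv2s := hidemst v hv2
      have hu_eq : m (m u (st u)) (m (st u) u) = u := by
        rw [hA, ← hA (st u) (st u) u, hu2s, hinv']
      have hv_eq : m (m v (st v)) (m (st v) v) = v := by
        rw [hA, ← hA (st v) (st v) v, hv2s, hinv']
      have hPu2 : m (m u (st u)) (m u (st u)) = m u (st u) := by
        rw [hA]; exact congrArg (m u) (hB1 u)
      have hPus : st (m u (st u)) = m u (st u) := hstse u
      have hQu2 : m (m (st u) u) (m (st u) u) = m (st u) u := by
        rw [hA]; exact congrArg (m (st u)) (hinv' u)
      have hQus : st (m (st u) u) = m (st u) u := hstss u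
      have hPv2 : m (m v (st v)) (m v (st v)) = m v (st v) := by
        rw [hA]; exact congrArg (m v) (hB1 v)
      have hPvs : st (m v (st v)) = m v (st v) := hstse v
      have hQv2 : m (m (st v) v) (m (st v) v) = m (st v) v := by
        rw [hA]; exact congrArg (m (st v)) (hinv' v)
      have hQvs : st (m (st v) v) = m (st v) v := hstss v
      have hpus : m p (st u) = st u := by
        have h := congrArg st hup; rwa [hstm, hps] at h
      have husp : m (st u) p = st u := by
        have h := congrArg st hpu; rwa [hstm, hps] at h
      have hpvs : m p (st v) = st v := by
        have h := congrArg st hvp; rwa [hstm, hps] at h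
      have hvsp : m (st v) p = st v := by
        have h := congrArg st hpv; rwa [hstm, hps] at h
      have hpPu : m p (m u (st u)) = m u (st u) := by rw [← hA, hpu]
      have hPup : m (m u (st u)) p = m u (st u) := by rw [hA, husp]
      have hpQu : m p (m (st u) u) = m (st u) u := by rw [← hA, hpus]
      have hQup : m (m (st u) u) p = m (st u) u := by rw [hA, hup]
      have hpPv : m p (m v (st v)) = m v (st v) := by rw [← hA, hpv]
      have hPvp : m (m v (st v)) p = m v (st v) := by rw [hA, hvsp]
      have hpQv : m p (m (st v) v) = m (st v) v := by rw [← hA, hpvs]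
      have hQvp : m (m (st v) v) p = m (st v) v := by rw [hA, hvp]
      have hcBC := BPCOMM p (m (st u) u) (m v (st v)) hp2 hQu2 hQus hPv2 hPvs hpQu hQup hpPv hPvp
      have hcAC := BPCOMM p (m u (st u)) (m v (st v)) hp2 hPu2 hPus hPv2 hPvs hpPu hPup hpPv hPvp
      have hcBD := BPCOMM p (m (st u) u) (m (st v) v) hp2 hQu2 hQus hQv2 hQvs hpQu hQup hpQv hQvp
      have hcAD := BPCOMM p (m u (st u)) (m (st v) v) hp2 hPu2 hPus hQv2 hQvs hpPu hPup hpQv hQvp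
      calc m u v = m (m (m u (st u)) (m (st u) u)) (m (m v (st v)) (m (st v) v)) := by
            rw [hu_eq, hv_eq]
        _ = m (m u (st u)) (m (m (st u) u) (m (m v (st v)) (m (st v) v))) := by rw [hA]
        _ = m (m u (st u)) (m (m v (st v)) (m (m (st u) u) (m (st v) v))) := by
            rw [cont' (m (st u) u) (m v (st v)) (m v (st v)) (m (st u) u) hcBC]
        _ = m (m v (st v)) (m (m u (st u)) (m (m (st u) u) (m (st v) v))) := by
            rw [cont' (m u (st u)) (m v (st v)) (m v (st v)) (m u (st u)) hcAC]
        _ = m (m v (st v)) (m (m u (st u)) (m (m (st v) v) (m (st u) u))) := by rw [hcBD]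
        _ = m (m v (st v)) (m (m (st v) v) (m (m u (st u)) (m (st u) u))) := by
            rw [cont' (m u (st u)) (m (st v) v) (m (st v) v) (m u (st u)) hcAD]
        _ = m (m (m v (st v)) (m (st v) v)) (m (m u (st u)) (m (st u) u)) := by rw [← hA]
        _ = m v u := by rw [hu_eq, hv_eq]
    have BCOMM : ∀ e u v, m e e = e → m u u = u → m v v = v →
        m e u = u → m u e = u → m e v = v → m v e = v → m u v = m v u := by
      intro e u v he2 hu2 hv2 heu hue hev hve
      have hFs : st (m (st e) e) = m (st e) e := hstss e
      have hF2 : m (m (st e) e) (m (st e) e) = m (st e) e := by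
        rw [hA]; exact congrArg (m (st e)) (hinv' e)
      have huF : m u (m (st e) e) = u := by
        calc m u (m (st e) e) = m (m u e) (m (st e) e) := by rw [hue]
          _ = m u (m e (m (st e) e)) := by simp only [hA]
          _ = m u e := by rw [hinv']
          _ = u := hue
      have hvF : m v (m (st e) e) = v := by
        calc m v (m (st e) e) = m (m v e) (m (st e) e) := by rw [hve]
          _ = m v (m e (m (st e) e)) := by simp only [hA]
          _ = m v e := by rw [hinv']
          _ = v := hve
      have huFc : ∀ t, m u (m (st e) (m e t)) = m u t := fun t => by
        have h := cont u (m (st e) e) u huF t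
        simp only [hA] at h
        exact h
      have hvFc : ∀ t, m v (m (st e) (m e t)) = m v t := fun t => by
        have h := cont v (m (st e) e) v hvF t
        simp only [hA] at h
        exact h
      have hFu2 : m (m (m (st e) e) u) (m (m (st e) e) u) = m (m (st e) e) u := by
        simp only [hA]
        rw [huFc, hu2]
      have hFv2 : m (m (m (st e) e) v) (m (m (st e) e) v) = m (m (st e) e) v := by
        simp only [hA]
        rw [hvFc, hv2]
      have hFFu : m (m (st e) e) (m (m (st e) e) u) = m (m (st e) e) u := by
        simp only [hA]; rw [hinvc]
      have hFFv : m (m (st e) e) (m (m (st e) e) v) = m (m (st e) e) v := by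
        simp only [hA]; rw [hinvc]
      have hFuF : m (m (m (st e) e) u) (m (st e) e) = m (m (st e) e) u := by
        simp only [hA]; rw [huF]
      have hFvF : m (m (m (st e) e) v) (m (st e) e) = m (m (st e) e) v := by
        simp only [hA]; rw [hvF]
      have hc := BCOMMproj (m (st e) e) (m (m (st e) e) u) (m (m (st e) e) v)
        hF2 hFs hFu2 hFv2 hFFu hFuF hFFv hFvF
      have hFuv : m (m (m (st e) e) u) (m (m (st e) e) v) = m (m (st e) e) (m u v) := by
        simp only [hA]; rw [huFc]
      have hFvu : m (m (m (st e) e) v) (m (m (st e) e) u) = m (m (st e) e) (m v u) := by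
        simp only [hA]; rw [hvFc]
      have hkey : m (m (st e) e) (m u v) = m (m (st e) e) (m v u) := by
        rw [← hFuv, hc, hFvu]
      have heF : m e (m (st e) e) = e := hinv' e
      have h_e_uv : m e (m u v) = m u v := by rw [← hA, heu]
      have h_e_vu : m e (m v u) = m v u := by rw [← hA, hev]
      calc m u v = m e (m u v) := h_e_uv.symm
        _ = m (m e (m (st e) e)) (m u v) := by rw [heF]
        _ = m e (m (m (st e) e) (m u v)) := by rw [hA]
        _ = m e (m (m (st e) e) (m v u)) := by rw [hkey]
        _ = m (m e (m (st e) e)) (m v u) := by rw [← hA]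
        _ = m e (m v u) := by rw [heF]
        _ = m v u := h_e_vu
    have hstar : ∀ x, m x (m (st x) (m (st x) (m x x))) = x := by
      intro x
      have h := Ir x (m (st x) x)
      rw [hstss] at h
      simp only [hA, hinv', hinvc] at h
      exact h
    have hstar' : ∀ x, m x (m x (m (st x) (m (st x) x))) = x := by
      intro x
      have h := congrArg st (hstar (st x))
      simp only [hstm, hss, hA] at h
      exact h
    constructor
    · intro x
      constructor
      · exact Or.inr ⟨m (m x (st x)) (st x), x, by symm; simp only [hA]; exact hstar x, rfl⟩
      · exact Or.inr ⟨m (st x) (m (st x) x), x, by symm; simp only [hA]; exact hstar' x, rfl⟩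
    · intro e he a ha
      have he' : m e e = e := he
      obtain ⟨z0, hz0⟩ := ha
      have hea : m e a = a := by rw [hz0, ← hA, ← hA, he']
      have hae : m a e = a := by rw [hz0, hA, he']
      have htwo : ∀ b c, (∃ z, b = m (m e z) e) → (∃ z, c = m (m e z) e) →
          m (m a b) a = a → m (m b a) b = b → m (m a c) a = a → m (m c a) c = c → b = c := by
        rintro b c ⟨zb, hzb⟩ ⟨zc, hzc⟩ haba hbab haca hcac
        have heb : m e b = b := by rw [hzb, ← hA, ← hA, he']
        have hbe : m b e = b := by rw [hzb, hA, he']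
        have hec2 : m e c = c := by rw [hzc, ← hA, ← hA, he']
        have hce2 : m c e = c := by rw [hzc, hA, he']
        have hab2 : m (m a b) (m a b) = m a b := by rw [← hA, haba]
        have hac2 : m (m a c) (m a c) = m a c := by rw [← hA, haca]
        have hba2 : m (m b a) (m b a) = m b a := by rw [hA, ← hA a b a, haba]
        have hca2 : m (m c a) (m c a) = m c a := by rw [hA, ← hA a c a, haca]
        have h_e_ba : m e (m b a) = m b a := by rw [← hA, heb]
        have h_ba_e : m (m b a) e = m b a := by rw [hA, hae]
        have h_e_ca : m e (m c a) = m c a := by rw [← hA, hec2]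
        have h_ca_e : m (m c a) e = m c a := by rw [hA, hae]
        have h_e_ab : m e (m a b) = m a b := by rw [← hA, hea]
        have h_ab_e : m (m a b) e = m a b := by rw [hA, hbe]
        have h_e_ac : m e (m a c) = m a c := by rw [← hA, hea]
        have h_ac_e : m (m a c) e = m a c := by rw [hA, hce2]
        have hcomm1 := BCOMM e (m b a) (m c a) he' hba2 hca2 h_e_ba h_ba_e h_e_ca h_ca_e
        have hcomm2 := BCOMM e (m a c) (m a b) he' hac2 hab2 h_e_ac h_ac_e h_e_ab h_ab_e
        have hb_cab : b = m c (m a b) := by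
          calc b = m (m b a) b := hbab.symm
            _ = m (m b (m (m a c) a)) b := by rw [haca]
            _ = m (m (m b a) (m c a)) b := by simp only [hA]
            _ = m (m (m c a) (m b a)) b := by rw [hcomm1]
            _ = m c (m (m a b) (m a b)) := by simp only [hA]
            _ = m c (m a b) := by rw [hab2]
        have hc_bac : c = m b (m a c) := by
          calc c = m (m c a) c := hcac.symm
            _ = m (m c (m (m a b) a)) c := by rw [haba]
            _ = m (m (m c a) (m b a)) c := by simp only [hA]
            _ = m (m (m b a) (m c a)) c := by rw [← hcomm1]
            _ = m b (m (m a c) (m a c)) := by simp only [hA]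
            _ = m b (m a c) := by rw [hac2]
        calc b = m c (m a b) := hb_cab
          _ = m (m b (m a c)) (m a b) := by rw [← hc_bac]
          _ = m b (m (m a c) (m a b)) := by rw [hA]
          _ = m b (m (m a b) (m a c)) := by rw [hcomm2]
          _ = m (m (m b a) b) (m a c) := by simp only [hA]
          _ = m b (m a c) := by rw [hbab]
          _ = c := hc_bac.symm
      have haec := cont a e a hae
      have heac := cont e a a hea
      have hP1 : m (m a (m (m e (st a)) e)) a = a := by
        simp only [hA, hea, haec, hinv']
      have hP2 : m (m (m (m e (st a)) e) a) (m (m e (st a)) e) = m (m e (st a)) e := by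
        simp only [hA, heac, haec, hB1c]
      refine ⟨m (m e (st a)) e, ⟨⟨st a, rfl⟩, hP1, hP2⟩, ?_⟩
      rintro b' ⟨hb'f, h1', h2'⟩
      exact htwo b' (m (m e (st a)) e) hb'f ⟨st a, rfl⟩ h1' h2' hP1 hP2
end

section
/- A regular *-semigroup is both orthodox and locally inverse if and only if afgb = agfb for all elements a, b and all projections f, g. -/
section Aux

variable {S : Type*} {m : S → S → S} {st : S → S}

private lemma tl (ha : Assoc m) {x y z : S} (h : m x y = z) (t : S) :
    m x (m y t) = m z t := by rw [← ha, h]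

/-- Idempotents of a local monoid eSe commute; first: their product is idempotent. -/
private lemma localIdem (ha : Assoc m) (hL : LocallyInverse m) {e u v : S}
    (he : Idem m e) (hue : m e u = u) (hu2 : m u e = u) (huu : Idem m u)
    (hve : m e v = v) (hv2 : m v e = v) (hvv : Idem m v) :
    Idem m (m u v) := by
  have hA : ∀ a b c : S, m (m a b) c = m a (m b c) := ha
  have hea : m e (m u v) = m u v := by rw [← ha, hue]
  have hae : m (m u v) e = m u v := by rw [ha, hv2]
  have wa : m u v = m (m e (m u v)) e := by rw [hea, hae]
  obtain ⟨b, ⟨⟨x, hbx⟩, hab, hba⟩, huniq⟩ := hL e he (m u v) ⟨m u v, wa⟩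
  have heb : m e b = b := by rw [hbx, ← ha, ← ha, he]
  have hbe : m b e = b := by rw [hbx, ha, he]
  have habRA : m u (m v (m b (m u v))) = m u v := by simpa only [hA] using hab
  have hbaRA : m b (m u (m v b)) = b := by simpa only [hA] using hba
  have hba' : ∀ t, m b (m u (m v (m b t))) = m b t := fun t => by
    have := congrArg (fun z => m z t) hbaRA
    simpa only [hA] using this
  have hec : m e (m (m v b) u) = m (m v b) u := by rw [← ha, ← ha, hve]
  have hce : m (m (m v b) u) e = m (m v b) u := by rw [ha, hu2]
  have wc : m (m v b) u = m (m e (m (m v b) u)) e := by rw [hec, hce]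
  have haca : m (m (m u v) (m (m v b) u)) (m u v) = m u v := by
    simp only [hA]
    rw [tl ha hvv, tl ha huu]
    exact habRA
  have hcac : m (m (m (m v b) u) (m u v)) (m (m v b) u) = m (m v b) u := by
    simp only [hA]
    rw [tl ha huu, tl ha hvv, hba']
  have hcb : m (m v b) u = b := huniq (m (m v b) u) ⟨⟨m (m v b) u, wc⟩, haca, hcac⟩
  have hcc : m (m (m v b) u) (m (m v b) u) = m (m v b) u := by
    simp only [hA]
    rw [hba']
  have hbb : m b b = b := by rw [hcb] at hcc; exact hcc
  have wb : ∃ x : S, b = m (m e x) e := ⟨b, by rw [heb, hbe]⟩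
  obtain ⟨b2, _hb2, huniq2⟩ := hL e he b wb
  have h1 : b = b2 := huniq2 b ⟨wb, by rw [hbb]; exact hbb, by rw [hbb]; exact hbb⟩
  have h2 : m u v = b2 := huniq2 (m u v) ⟨⟨m u v, wa⟩, hba, hab⟩
  have hav : m u v = b := h2.trans h1.symm
  show m (m u v) (m u v) = m u v
  rw [hav]; exact hbb

private lemma localComm (ha : Assoc m) (hL : LocallyInverse m) {e u v : S}
    (he : Idem m e) (hue : m e u = u) (hu2 : m u e = u) (huu : Idem m u)
    (hve : m e v = v) (hv2 : m v e = v) (hvv : Idem m v) :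
    m u v = m v u := by
  have hA : ∀ a b c : S, m (m a b) c = m a (m b c) := ha
  have huv : Idem m (m u v) := localIdem ha hL he hue hu2 huu hve hv2 hvv
  have hvu : Idem m (m v u) := localIdem ha hL he hve hv2 hvv hue hu2 huu
  have huvE : m (m u v) (m u v) = m u v := huv
  have hvuE : m (m v u) (m v u) = m v u := hvu
  have huvRA : m u (m v (m u v)) = m u v := by simpa only [hA] using huvE
  have hvuRA : m v (m u (m v u)) = m v u := by simpa only [hA] using hvuE
  have hea : m e (m u v) = m u v := by rw [← ha, hue]
  have hae : m (m u v) e = m u v := by rw [ha, hv2]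
  have wa : m u v = m (m e (m u v)) e := by rw [hea, hae]
  have hea2 : m e (m v u) = m v u := by rw [← ha, hve]
  have hae2 : m (m v u) e = m v u := by rw [ha, hu2]
  have wvu : m v u = m (m e (m v u)) e := by rw [hea2, hae2]
  obtain ⟨d, _hd, huniqd⟩ := hL e he (m u v) ⟨m u v, wa⟩
  have h1 : m u v = d :=
    huniqd (m u v) ⟨⟨m u v, wa⟩, by rw [huv]; exact huv, by rw [huv]; exact huv⟩
  have p1 : m (m (m u v) (m v u)) (m u v) = m u v := by
    simp only [hA]
    rw [tl ha hvv, tl ha huu]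
    exact huvRA
  have p2 : m (m (m v u) (m u v)) (m v u) = m v u := by
    simp only [hA]
    rw [tl ha huu, tl ha hvv]
    exact hvuRA
  have h2 : m v u = d := huniqd (m v u) ⟨⟨m v u, wvu⟩, p1, p2⟩
  exact h1.trans h2.symm

/-- Sandwich commuting: e u e v e = e v e u e for idempotents. -/
private lemma hCsand (ha : Assoc m) (hO : Orthodox m) (hL : LocallyInverse m)
    {e u v : S} (he : Idem m e) (hu : Idem m u) (hv : Idem m v) :
    m (m (m (m e u) e) v) e = m (m (m (m e v) e) u) e := by
  have hA : ∀ a b c : S, m (m a b) c = m a (m b c) := ha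
  have heu' : m e (m (m e u) e) = m (m e u) e := by rw [← ha, ← ha, he]
  have hu'e : m (m (m e u) e) e = m (m e u) e := by rw [ha, he]
  have hu'I : Idem m (m (m e u) e) := hO _ e (hO e u he hu) he
  have hev' : m e (m (m e v) e) = m (m e v) e := by rw [← ha, ← ha, he]
  have hv'e : m (m (m e v) e) e = m (m e v) e := by rw [ha, he]
  have hv'I : Idem m (m (m e v) e) := hO _ e (hO e v he hv) he
  have hcomm := localComm ha hL he heu' hu'e hu'I hev' hv'e hv'I
  simp only [hA] at hcomm ⊢
  rw [tl ha he, tl ha he] at hcomm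
  exact hcomm

/-- The word lemma: p f g q = p g f q for idempotents, in orthodox locally inverse. -/
private lemma keyword (ha : Assoc m) (hO : Orthodox m) (hL : LocallyInverse m)
    {p f g q : S} (hp : Idem m p) (hf : Idem m f) (hg : Idem m g) (hq : Idem m q) :
    m (m (m p f) g) q = m (m (m p g) f) q := by
  have hA : ∀ a b c : S, m (m a b) c = m a (m b c) := ha
  have Iq : Idem m q := hq
  have Ip : Idem m p := hp
  have Ig : Idem m g := hg
  have Iqp : Idem m (m q p) := hO q p hq Ip
  have Ifg : Idem m (m f g) := hO f g hf Ig
  have If : Idem m f := hf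
  have Igf : Idem m (m g f) := hO g f hg If
  have Igq : Idem m (m g q) := hO g q hg Iq
  have Ifgq : Idem m (m f (m g q)) := hO f (m g q) hf Igq
  have Ipgf : Idem m (m p (m g f)) := hO p (m g f) hp Igf
  have Ipg : Idem m (m p g) := hO p g hp Ig
  have Iqpg : Idem m (m q (m p g)) := hO q (m p g) hq Ipg
  have Ipf : Idem m (m p f) := hO p f hp If
  have Iqpf : Idem m (m q (m p f)) := hO q (m p f) hq Ipf
  have Igqp : Idem m (m g (m q p)) := hO g (m q p) hg Iqp
  have Ifqp : Idem m (m f (m q p)) := hO f (m q p) hf Iqp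
  have Ifq : Idem m (m f q) := hO f q hf Iq
  have Igfq : Idem m (m g (m f q)) := hO g (m f q) hg Ifq
  have Ipgfq : Idem m (m p (m g (m f q))) := hO p (m g (m f q)) hp Igfq
  have Ipfgq : Idem m (m p (m f (m g q))) := hO p (m f (m g q)) hp Ifgq
  have Igfgq : Idem m (m g (m f (m g q))) := hO g (m f (m g q)) hg Ifgq
  have Igfg : Idem m (m g (m f g)) := hO g (m f g) hg Ifg
  have Ipgfg : Idem m (m p (m g (m f g))) := hO p (m g (m f g)) hp Igfg
  have Iqpgf : Idem m (m q (m p (m g f))) := hO q (m p (m g f)) hq Ipgf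
  have Ifgqp : Idem m (m f (m g (m q p))) := hO f (m g (m q p)) hf Igqp
  have e0 : (m p (m f (m g q))) = (m p (m f (m g (m q (m p (m f (m g q))))))) := by
    have h : (m p (m f (m g q))) = (m (m p (m f (m g q))) (m p (m f (m g q)))) := by rw [Ipfgq]

    calc (m p (m f (m g q))) = (m p (m f (m g q))) := by simp only [hA]
      _ = (m (m p (m f (m g q))) (m p (m f (m g q)))) := h
      _ = (m p (m f (m g (m q (m p (m f (m g q))))))) := by simp only [hA]
  have e1 : (m p (m f (m g (m q (m p (m f (m g q))))))) = (m p (m f (m g (m q (m p (m f (m g (m f (m g q))))))))) := by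
    have h : (m (m p (m f (m g (m q p)))) (m (m f g) q)) = (m (m p (m f (m g (m q p)))) (m (m (m f g) (m f g)) q)) := by rw [Ifg]

    calc (m p (m f (m g (m q (m p (m f (m g q))))))) = (m (m p (m f (m g (m q p)))) (m (m f g) q)) := by simp only [hA]
      _ = (m (m p (m f (m g (m q p)))) (m (m (m f g) (m f g)) q)) := h
      _ = (m p (m f (m g (m q (m p (m f (m g (m f (m g q))))))))) := by simp only [hA]
  have e2 : (m p (m f (m g (m q (m p (m f (m g (m f (m g q))))))))) = (m p (m f (m g (m q (m p (m g (m q (m p (m f (m g (m f (m g q)))))))))))) := by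
    have h : (m (m p f) (m (m g (m q p)) (m f (m g (m f (m g q)))))) = (m (m p f) (m (m (m g (m q p)) (m g (m q p))) (m f (m g (m f (m g q)))))) := by rw [Igqp]

    calc (m p (m f (m g (m q (m p (m f (m g (m f (m g q))))))))) = (m (m p f) (m (m g (m q p)) (m f (m g (m f (m g q)))))) := by simp only [hA]
      _ = (m (m p f) (m (m (m g (m q p)) (m g (m q p))) (m f (m g (m f (m g q)))))) := h
      _ = (m p (m f (m g (m q (m p (m g (m q (m p (m f (m g (m f (m g q)))))))))))) := by simp only [hA]
  have e3 : (m p (m f (m g (m q (m p (m g (m q (m p (m f (m g (m f (m g q)))))))))))) = (m p (m f (m g (m q (m p (m f (m g (m q (m p (m g (m f (m g q)))))))))))) := by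
    have h : (m (m p f) (m (m (m (m (m g (m q p)) g) (m q (m p f))) g) (m f (m g q)))) = (m (m p f) (m (m (m (m (m g (m q (m p f))) g) (m q p)) g) (m f (m g q)))) := by rw [hCsand ha hO hL Ig Iqp Iqpf]
    calc (m p (m f (m g (m q (m p (m g (m q (m p (m f (m g (m f (m g q)))))))))))) = (m (m p f) (m (m (m (m (m g (m q p)) g) (m q (m p f))) g) (m f (m g q)))) := by simp only [hA]
      _ = (m (m p f) (m (m (m (m (m g (m q (m p f))) g) (m q p)) g) (m f (m g q)))) := h
      _ = (m p (m f (m g (m q (m p (m f (m g (m q (m p (m g (m f (m g q)))))))))))) := by simp only [hA]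
  have e4 : (m p (m f (m g (m q (m p (m f (m g (m q (m p (m g (m f (m g q)))))))))))) = (m p (m f (m g (m q (m p (m g (m f (m g q)))))))) := by
    have h : (m (m (m p (m f (m g q))) (m p (m f (m g q)))) (m p (m g (m f (m g q))))) = (m (m p (m f (m g q))) (m p (m g (m f (m g q))))) := by rw [Ipfgq]
    calc (m p (m f (m g (m q (m p (m f (m g (m q (m p (m g (m f (m g q)))))))))))) = (m (m (m p (m f (m g q))) (m p (m f (m g q)))) (m p (m g (m f (m g q))))) := by simp only [hA]
      _ = (m (m p (m f (m g q))) (m p (m g (m f (m g q))))) := h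
      _ = (m p (m f (m g (m q (m p (m g (m f (m g q)))))))) := by simp only [hA]
  have e5 : (m p (m f (m g (m q (m p (m g (m f (m g q)))))))) = (m p (m f (m g (m q (m p (m g (m f (m q (m p (m g (m f (m g q)))))))))))) := by
    have h : (m (m p (m f g)) (m (m q (m p (m g f))) (m g q))) = (m (m p (m f g)) (m (m (m q (m p (m g f))) (m q (m p (m g f)))) (m g q))) := by rw [Iqpgf]

    calc (m p (m f (m g (m q (m p (m g (m f (m g q)))))))) = (m (m p (m f g)) (m (m q (m p (m g f))) (m g q))) := by simp only [hA]
      _ = (m (m p (m f g)) (m (m (m q (m p (m g f))) (m q (m p (m g f)))) (m g q))) := h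
      _ = (m p (m f (m g (m q (m p (m g (m f (m q (m p (m g (m f (m g q)))))))))))) := by simp only [hA]
  have e6 : (m p (m f (m g (m q (m p (m g (m f (m q (m p (m g (m f (m g q)))))))))))) = (m p (m f (m g (m q (m p (m g (m f (m g (m q (m p (m g (m f q)))))))))))) := by
    have h : (m (m p (m f g)) (m (m (m (m q (m p (m g f))) q) (m p (m g (m f g)))) q)) = (m (m p (m f g)) (m (m (m (m q (m p (m g (m f g)))) q) (m p (m g f))) q)) := by rw [hCsand ha hO hL Iq Ipgf Ipgfg]
    calc (m p (m f (m g (m q (m p (m g (m f (m q (m p (m g (m f (m g q)))))))))))) = (m (m p (m f g)) (m (m (m (m q (m p (m g f))) q) (m p (m g (m f g)))) q)) := by simp only [hA]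
      _ = (m (m p (m f g)) (m (m (m (m q (m p (m g (m f g)))) q) (m p (m g f))) q)) := h
      _ = (m p (m f (m g (m q (m p (m g (m f (m g (m q (m p (m g (m f q)))))))))))) := by simp only [hA]
  have e7 : (m p (m f (m g (m q (m p (m g (m f (m g (m q (m p (m g (m f q)))))))))))) = (m p (m g (m f (m g (m q (m p (m f (m g (m q (m p (m g (m f q)))))))))))) := by
    have h : (m (m (m (m (m p (m f (m g q))) p) (m g (m f (m g q)))) p) (m g (m f q))) = (m (m (m (m (m p (m g (m f (m g q)))) p) (m f (m g q))) p) (m g (m f q))) := by rw [hCsand ha hO hL Ip Ifgq Igfgq]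
    calc (m p (m f (m g (m q (m p (m g (m f (m g (m q (m p (m g (m f q)))))))))))) = (m (m (m (m (m p (m f (m g q))) p) (m g (m f (m g q)))) p) (m g (m f q))) := by simp only [hA]
      _ = (m (m (m (m (m p (m g (m f (m g q)))) p) (m f (m g q))) p) (m g (m f q))) := h
      _ = (m p (m g (m f (m g (m q (m p (m f (m g (m q (m p (m g (m f q)))))))))))) := by simp only [hA]
  have e8 : (m p (m g (m f (m g (m q (m p (m f (m g (m q (m p (m g (m f q)))))))))))) = (m p (m g (m f (m g (m q (m p (m g (m f q)))))))) := by
    have h : (m (m p g) (m (m (m f (m g (m q p))) (m f (m g (m q p)))) (m g (m f q)))) = (m (m p g) (m (m f (m g (m q p))) (m g (m f q)))) := by rw [Ifgqp]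
    calc (m p (m g (m f (m g (m q (m p (m f (m g (m q (m p (m g (m f q)))))))))))) = (m (m p g) (m (m (m f (m g (m q p))) (m f (m g (m q p)))) (m g (m f q)))) := by simp only [hA]
      _ = (m (m p g) (m (m f (m g (m q p))) (m g (m f q)))) := h
      _ = (m p (m g (m f (m g (m q (m p (m g (m f q)))))))) := by simp only [hA]
  have e9 : (m p (m g (m f (m g (m q (m p (m g (m f q)))))))) = (m p (m g (m f (m g (m q (m p (m g (m f (m q (m p (m g (m f q)))))))))))) := by
    have h : (m (m p (m g (m f g))) (m (m q (m p (m g f))) q)) = (m (m p (m g (m f g))) (m (m (m q (m p (m g f))) (m q (m p (m g f)))) q)) := by rw [Iqpgf]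

    calc (m p (m g (m f (m g (m q (m p (m g (m f q)))))))) = (m (m p (m g (m f g))) (m (m q (m p (m g f))) q)) := by simp only [hA]
      _ = (m (m p (m g (m f g))) (m (m (m q (m p (m g f))) (m q (m p (m g f)))) q)) := h
      _ = (m p (m g (m f (m g (m q (m p (m g (m f (m q (m p (m g (m f q)))))))))))) := by simp only [hA]
  have e10 : (m p (m g (m f (m g (m q (m p (m g (m f (m q (m p (m g (m f q)))))))))))) = (m p (m g (m f (m g (m f (m q (m p (m g (m q (m p (m g (m f q)))))))))))) := by
    have h : (m (m p (m g f)) (m (m (m (m (m g (m q p)) g) (m f (m q p))) g) (m f q))) = (m (m p (m g f)) (m (m (m (m (m g (m f (m q p))) g) (m q p)) g) (m f q))) := by rw [hCsand ha hO hL Ig Iqp Ifqp]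
    calc (m p (m g (m f (m g (m q (m p (m g (m f (m q (m p (m g (m f q)))))))))))) = (m (m p (m g f)) (m (m (m (m (m g (m q p)) g) (m f (m q p))) g) (m f q))) := by simp only [hA]
      _ = (m (m p (m g f)) (m (m (m (m (m g (m f (m q p))) g) (m q p)) g) (m f q))) := h
      _ = (m p (m g (m f (m g (m f (m q (m p (m g (m q (m p (m g (m f q)))))))))))) := by simp only [hA]
  have e11 : (m p (m g (m f (m g (m f (m q (m p (m g (m q (m p (m g (m f q)))))))))))) = (m p (m g (m f (m q (m p (m g (m q (m p (m g (m f q)))))))))) := by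
    have h : (m p (m (m (m g f) (m g f)) (m q (m p (m g (m q (m p (m g (m f q))))))))) = (m p (m (m g f) (m q (m p (m g (m q (m p (m g (m f q))))))))) := by rw [Igf]
    calc (m p (m g (m f (m g (m f (m q (m p (m g (m q (m p (m g (m f q)))))))))))) = (m p (m (m (m g f) (m g f)) (m q (m p (m g (m q (m p (m g (m f q))))))))) := by simp only [hA]
      _ = (m p (m (m g f) (m q (m p (m g (m q (m p (m g (m f q))))))))) := h
      _ = (m p (m g (m f (m q (m p (m g (m q (m p (m g (m f q)))))))))) := by simp only [hA]
  have e12 : (m p (m g (m f (m q (m p (m g (m q (m p (m g (m f q)))))))))) = (m p (m g (m f (m q (m p (m g (m f q))))))) := by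
    have h : (m (m p (m g f)) (m (m (m q (m p g)) (m q (m p g))) (m f q))) = (m (m p (m g f)) (m (m q (m p g)) (m f q))) := by rw [Iqpg]
    calc (m p (m g (m f (m q (m p (m g (m q (m p (m g (m f q)))))))))) = (m (m p (m g f)) (m (m (m q (m p g)) (m q (m p g))) (m f q))) := by simp only [hA]
      _ = (m (m p (m g f)) (m (m q (m p g)) (m f q))) := h
      _ = (m p (m g (m f (m q (m p (m g (m f q))))))) := by simp only [hA]
  have e13 : (m p (m g (m f (m q (m p (m g (m f q))))))) = (m p (m g (m f q))) := by
    have h : (m (m p (m g (m f q))) (m p (m g (m f q)))) = (m p (m g (m f q))) := by rw [Ipgfq]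
    calc (m p (m g (m f (m q (m p (m g (m f q))))))) = (m (m p (m g (m f q))) (m p (m g (m f q)))) := by simp only [hA]
      _ = (m p (m g (m f q))) := h
      _ = (m p (m g (m f q))) := by simp only [hA]
  have final : (m p (m f (m g q))) = (m p (m g (m f q))) := (((((((((((((e0.trans e1).trans e2).trans e3).trans e4).trans e5).trans e6).trans e7).trans e8).trans e9).trans e10).trans e11).trans e12).trans e13)
  calc m (m (m p f) g) q = (m p (m f (m g q))) := by simp only [hA]
    _ = (m p (m g (m f q))) := final
    _ = m (m (m p g) f) q := by simp only [hA]



private lemma projR (ha : Assoc m) (hxx : ∀ x : S, m (m x (st x)) x = x)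
    (hss : ∀ x : S, st (st x) = x) (hanti : ∀ x y : S, st (m x y) = m (st y) (st x))
    (x : S) : Proj m st (m x (st x)) := by
  have hA : ∀ a b c : S, m (m a b) c = m a (m b c) := ha
  constructor
  · have h := hxx (st x)
    rw [hss] at h
    have hxsRA : m (st x) (m x (st x)) = st x := by simpa only [hA] using h
    show m (m x (st x)) (m x (st x)) = m x (st x)
    simp only [hA]
    rw [hxsRA]
  · rw [hanti, hss]

private lemma projL (ha : Assoc m) (hxx : ∀ x : S, m (m x (st x)) x = x)
    (hss : ∀ x : S, st (st x) = x) (hanti : ∀ x y : S, st (m x y) = m (st y) (st x))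
    (x : S) : Proj m st (m (st x) x) := by
  have hA : ∀ a b c : S, m (m a b) c = m a (m b c) := ha
  constructor
  · have hxxRA : m x (m (st x) x) = x := by simpa only [hA] using hxx x
    show m (m (st x) x) (m (st x) x) = m (st x) x
    simp only [hA]
    rw [hxxRA]
  · rw [hanti, hss]

private lemma decompI (ha : Assoc m) (hxx : ∀ x : S, m (m x (st x)) x = x)
    (hanti : ∀ x y : S, st (m x y) = m (st y) (st x))
    {x : S} (hx : Idem m x) : m (m x (st x)) (m (st x) x) = x := by
  have hA : ∀ a b c : S, m (m a b) c = m a (m b c) := ha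
  have hsx : m (st x) (st x) = st x := by
    have h := hanti x x
    rw [hx] at h
    exact h.symm
  have hxxRA : m x (m (st x) x) = x := by simpa only [hA] using hxx x
  simp only [hA]
  rw [tl ha hsx]
  exact hxxRA


private lemma hypComm (ha : Assoc m) (hxx : ∀ x : S, m (m x (st x)) x = x)
    (hss : ∀ x : S, st (st x) = x) (hanti : ∀ x y : S, st (m x y) = m (st y) (st x))
    (hyp : ∀ (a b f g : S), Proj m st f → Proj m st g →
        m (m (m a f) g) b = m (m (m a g) f) b)
    {e u v : S} (he : Idem m e) (hue : m e u = u) (hu2 : m u e = u) (huu : Idem m u)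
    (hve : m e v = v) (hv2 : m v e = v) (hvv : Idem m v) : m u v = m v u := by
  have hA : ∀ a b c : S, m (m a b) c = m a (m b c) := ha
  have hPu : Proj m st (m u (st u)) := projR ha hxx hss hanti u
  have hQu : Proj m st (m (st u) u) := projL ha hxx hss hanti u
  have hPv : Proj m st (m v (st v)) := projR ha hxx hss hanti v
  have hQv : Proj m st (m (st v) v) := projL ha hxx hss hanti v
  have hdu : m (m u (st u)) (m (st u) u) = u := decompI ha hxx hanti huu
  have hdv : m (m v (st v)) (m (st v) v) = v := decompI ha hxx hanti hvv
  have s0 : (m e (m (m u (st u)) (m (m (st u) u) (m (m v (st v)) (m (m (st v) v) e))))) = (m e (m (m u (st u)) (m (m v (st v)) (m (m (st u) u) (m (m (st v) v) e))))) := by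
    have h := hyp (m e (m u (st u))) (m (m (st v) v) e) (m (st u) u) (m v (st v)) hQu hPv
    calc (m e (m (m u (st u)) (m (m (st u) u) (m (m v (st v)) (m (m (st v) v) e))))) = (m (m (m (m e (m u (st u))) (m (st u) u)) (m v (st v))) (m (m (st v) v) e)) := by simp only [hA]
      _ = (m (m (m (m e (m u (st u))) (m v (st v))) (m (st u) u)) (m (m (st v) v) e)) := h
      _ = (m e (m (m u (st u)) (m (m v (st v)) (m (m (st u) u) (m (m (st v) v) e))))) := by simp only [hA]
  have s1 : (m e (m (m u (st u)) (m (m v (st v)) (m (m (st u) u) (m (m (st v) v) e))))) = (m e (m (m v (st v)) (m (m u (st u)) (m (m (st u) u) (m (m (st v) v) e))))) := by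
    have h := hyp e (m (m (st u) u) (m (m (st v) v) e)) (m u (st u)) (m v (st v)) hPu hPv
    calc (m e (m (m u (st u)) (m (m v (st v)) (m (m (st u) u) (m (m (st v) v) e))))) = (m (m (m e (m u (st u))) (m v (st v))) (m (m (st u) u) (m (m (st v) v) e))) := by simp only [hA]
      _ = (m (m (m e (m v (st v))) (m u (st u))) (m (m (st u) u) (m (m (st v) v) e))) := h
      _ = (m e (m (m v (st v)) (m (m u (st u)) (m (m (st u) u) (m (m (st v) v) e))))) := by simp only [hA]
  have s2 : (m e (m (m v (st v)) (m (m u (st u)) (m (m (st u) u) (m (m (st v) v) e))))) = (m e (m (m v (st v)) (m (m u (st u)) (m (m (st v) v) (m (m (st u) u) e))))) := by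
    have h := hyp (m e (m (m v (st v)) (m u (st u)))) e (m (st u) u) (m (st v) v) hQu hQv
    calc (m e (m (m v (st v)) (m (m u (st u)) (m (m (st u) u) (m (m (st v) v) e))))) = (m (m (m (m e (m (m v (st v)) (m u (st u)))) (m (st u) u)) (m (st v) v)) e) := by simp only [hA]
      _ = (m (m (m (m e (m (m v (st v)) (m u (st u)))) (m (st v) v)) (m (st u) u)) e) := h
      _ = (m e (m (m v (st v)) (m (m u (st u)) (m (m (st v) v) (m (m (st u) u) e))))) := by simp only [hA]
  have s3 : (m e (m (m v (st v)) (m (m u (st u)) (m (m (st v) v) (m (m (st u) u) e))))) = (m e (m (m v (st v)) (m (m (st v) v) (m (m u (st u)) (m (m (st u) u) e))))) := by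
    have h := hyp (m e (m v (st v))) (m (m (st u) u) e) (m u (st u)) (m (st v) v) hPu hQv
    calc (m e (m (m v (st v)) (m (m u (st u)) (m (m (st v) v) (m (m (st u) u) e))))) = (m (m (m (m e (m v (st v))) (m u (st u))) (m (st v) v)) (m (m (st u) u) e)) := by simp only [hA]
      _ = (m (m (m (m e (m v (st v))) (m (st v) v)) (m u (st u))) (m (m (st u) u) e)) := h
      _ = (m e (m (m v (st v)) (m (m (st v) v) (m (m u (st u)) (m (m (st u) u) e))))) := by simp only [hA]
  calc m u v = m (m e u) (m v e) := by rw [hue, hv2]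
    _ = m (m e (m (m u (st u)) (m (st u) u))) (m (m (m v (st v)) (m (st v) v)) e) := by rw [hdu, hdv]
    _ = (m e (m (m u (st u)) (m (m (st u) u) (m (m v (st v)) (m (m (st v) v) e))))) := by simp only [hA]
    _ = (m e (m (m v (st v)) (m (m (st v) v) (m (m u (st u)) (m (m (st u) u) e))))) := ((s0.trans s1).trans s2).trans s3
    _ = m (m e (m (m v (st v)) (m (st v) v))) (m (m (m u (st u)) (m (st u) u)) e) := by simp only [hA]
    _ = m (m e v) (m u e) := by rw [hdu, hdv]
    _ = m v u := by rw [hve, hu2]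

end Aux

theorem stmt8 {S : Type*} (m : S → S → S) (st : S → S)
    (hS : RegStar m st) :
    (Orthodox m ∧ LocallyInverse m) ↔
      ∀ (a b f g : S), Proj m st f → Proj m st g →
        m (m (m a f) g) b = m (m (m a g) f) b := by
  obtain ⟨ha, hxx, hss, hanti⟩ := hS
  constructor
  · rintro ⟨hO, hL⟩ a b f g hf hg
    have hA : ∀ x y z : S, m (m x y) z = m x (m y z) := ha
    have hxxa : m a (m (st a) a) = a := by simpa only [hA] using hxx a
    have hxxbRA : m b (m (st b) b) = b := by simpa only [hA] using hxx b
    have hP : Idem m (m (st a) a) := (projL ha hxx hss hanti a).1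
    have hQ : Idem m (m b (st b)) := (projR ha hxx hss hanti b).1
    have key := keyword ha hO hL hP hf.1 hg.1 hQ
    have h1 : ∀ t, m a (m (st a) (m a t)) = m a t := fun t => by
      have := congrArg (fun z => m z t) (hxx a)
      simpa only [hA] using this
    have lhs_eq : m (m (m a f) g) b
        = m a (m (st a) (m a (m f (m g (m b (m (st b) b)))))) := by
      simp only [hA]
      rw [h1, hxxbRA]
    have rhs_eq : m (m (m a g) f) b
        = m a (m (st a) (m a (m g (m f (m b (m (st b) b)))))) := by
      simp only [hA]
      rw [h1, hxxbRA]
    have mid : m a (m (st a) (m a (m f (m g (m b (m (st b) b))))))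
        = m a (m (st a) (m a (m g (m f (m b (m (st b) b)))))) := by
      have := congrArg (fun z => m a (m z b)) key
      simpa only [hA] using this
    exact lhs_eq.trans (mid.trans rhs_eq.symm)
  · intro hyp
    have hA : ∀ x y z : S, m (m x y) z = m x (m y z) := ha
    constructor
    · intro e f he hf
      obtain ⟨P, hPd⟩ : ∃ z : S, z = m e (st e) := ⟨_, rfl⟩
      obtain ⟨Q, hQd⟩ : ∃ z : S, z = m (st e) e := ⟨_, rfl⟩
      obtain ⟨R, hRd⟩ : ∃ z : S, z = m f (st f) := ⟨_, rfl⟩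
      obtain ⟨T, hTd⟩ : ∃ z : S, z = m (st f) f := ⟨_, rfl⟩
      have hPj : Proj m st P := hPd ▸ projR ha hxx hss hanti e
      have hQj : Proj m st Q := hQd ▸ projL ha hxx hss hanti e
      have hRj : Proj m st R := hRd ▸ projR ha hxx hss hanti f
      have hTj : Proj m st T := hTd ▸ projL ha hxx hss hanti f
      have hPi : m P P = P := hPj.1
      have hQi : m Q Q = Q := hQj.1
      have hRi : m R R = R := hRj.1
      have hTi : m T T = T := hTj.1
      have hePQ : e = m P Q := by
        rw [hPd, hQd]; exact (decompI ha hxx hanti he).symm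
      have hfRT : f = m R T := by
        rw [hRd, hTd]; exact (decompI ha hxx hanti hf).symm
      have e0 : (m P (m Q (m R (m T (m P (m Q (m R T))))))) = (m P (m Q (m R (m P (m T (m Q (m R T))))))) := by
        have h := hyp (m P (m Q R)) (m Q (m R T)) T P hTj hPj
        calc (m P (m Q (m R (m T (m P (m Q (m R T))))))) = (m (m (m (m P (m Q R)) T) P) (m Q (m R T))) := by simp only [hA]
          _ = (m (m (m (m P (m Q R)) P) T) (m Q (m R T))) := h
          _ = (m P (m Q (m R (m P (m T (m Q (m R T))))))) := by simp only [hA]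
      have e1 : (m P (m Q (m R (m P (m T (m Q (m R T))))))) = (m P (m Q (m P (m R (m T (m Q (m R T))))))) := by
        have h := hyp (m P Q) (m T (m Q (m R T))) R P hRj hPj
        calc (m P (m Q (m R (m P (m T (m Q (m R T))))))) = (m (m (m (m P Q) R) P) (m T (m Q (m R T)))) := by simp only [hA]
          _ = (m (m (m (m P Q) P) R) (m T (m Q (m R T)))) := h
          _ = (m P (m Q (m P (m R (m T (m Q (m R T))))))) := by simp only [hA]
      have e2 : (m P (m Q (m P (m R (m T (m Q (m R T))))))) = (m P (m P (m Q (m R (m T (m Q (m R T))))))) := by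
        have h := hyp P (m R (m T (m Q (m R T)))) Q P hQj hPj
        calc (m P (m Q (m P (m R (m T (m Q (m R T))))))) = (m (m (m P Q) P) (m R (m T (m Q (m R T))))) := by simp only [hA]
          _ = (m (m (m P P) Q) (m R (m T (m Q (m R T))))) := h
          _ = (m P (m P (m Q (m R (m T (m Q (m R T))))))) := by simp only [hA]
      have e3 : (m P (m P (m Q (m R (m T (m Q (m R T))))))) = (m P (m Q (m R (m T (m Q (m R T)))))) := by
        have h : (m (m P P) (m Q (m R (m T (m Q (m R T)))))) = (m P (m Q (m R (m T (m Q (m R T)))))) := by rw [hPi]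
        calc (m P (m P (m Q (m R (m T (m Q (m R T))))))) = (m (m P P) (m Q (m R (m T (m Q (m R T)))))) := by simp only [hA]
          _ = (m P (m Q (m R (m T (m Q (m R T)))))) := h
          _ = (m P (m Q (m R (m T (m Q (m R T)))))) := by simp only [hA]
      have e4 : (m P (m Q (m R (m T (m Q (m R T)))))) = (m P (m Q (m R (m Q (m T (m R T)))))) := by
        have h := hyp (m P (m Q R)) (m R T) T Q hTj hQj
        calc (m P (m Q (m R (m T (m Q (m R T)))))) = (m (m (m (m P (m Q R)) T) Q) (m R T)) := by simp only [hA]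
          _ = (m (m (m (m P (m Q R)) Q) T) (m R T)) := h
          _ = (m P (m Q (m R (m Q (m T (m R T)))))) := by simp only [hA]
      have e5 : (m P (m Q (m R (m Q (m T (m R T)))))) = (m P (m Q (m Q (m R (m T (m R T)))))) := by
        have h := hyp (m P Q) (m T (m R T)) R Q hRj hQj
        calc (m P (m Q (m R (m Q (m T (m R T)))))) = (m (m (m (m P Q) R) Q) (m T (m R T))) := by simp only [hA]
          _ = (m (m (m (m P Q) Q) R) (m T (m R T))) := h
          _ = (m P (m Q (m Q (m R (m T (m R T)))))) := by simp only [hA]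
      have e6 : (m P (m Q (m Q (m R (m T (m R T)))))) = (m P (m Q (m R (m T (m R T))))) := by
        have h : (m P (m (m Q Q) (m R (m T (m R T))))) = (m P (m Q (m R (m T (m R T))))) := by rw [hQi]
        calc (m P (m Q (m Q (m R (m T (m R T)))))) = (m P (m (m Q Q) (m R (m T (m R T))))) := by simp only [hA]
          _ = (m P (m Q (m R (m T (m R T))))) := h
          _ = (m P (m Q (m R (m T (m R T))))) := by simp only [hA]
      have e7 : (m P (m Q (m R (m T (m R T))))) = (m P (m Q (m R (m R (m T T))))) := by
        have h := hyp (m P (m Q R)) T T R hTj hRj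
        calc (m P (m Q (m R (m T (m R T))))) = (m (m (m (m P (m Q R)) T) R) T) := by simp only [hA]
          _ = (m (m (m (m P (m Q R)) R) T) T) := h
          _ = (m P (m Q (m R (m R (m T T))))) := by simp only [hA]
      have e8 : (m P (m Q (m R (m R (m T T))))) = (m P (m Q (m R (m T T)))) := by
        have h : (m (m P Q) (m (m R R) (m T T))) = (m (m P Q) (m R (m T T))) := by rw [hRi]
        calc (m P (m Q (m R (m R (m T T))))) = (m (m P Q) (m (m R R) (m T T))) := by simp only [hA]
          _ = (m (m P Q) (m R (m T T))) := h
          _ = (m P (m Q (m R (m T T)))) := by simp only [hA]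
      have e9 : (m P (m Q (m R (m T T)))) = (m P (m Q (m R T))) := by
        have h : (m (m P (m Q R)) (m T T)) = (m (m P (m Q R)) T) := by rw [hTi]
        calc (m P (m Q (m R (m T T)))) = (m (m P (m Q R)) (m T T)) := by simp only [hA]
          _ = (m (m P (m Q R)) T) := h
          _ = (m P (m Q (m R T))) := by simp only [hA]
      have final : (m P (m Q (m R (m T (m P (m Q (m R T))))))) = (m P (m Q (m R T))) := (((((((((e0.trans e1).trans e2).trans e3).trans e4).trans e5).trans e6).trans e7).trans e8).trans e9)
      show m (m e f) (m e f) = m e f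
      rw [hePQ, hfRT]
      calc m (m (m P Q) (m R T)) (m (m P Q) (m R T))
          = (m P (m Q (m R (m T (m P (m Q (m R T))))))) := by simp only [hA]
        _ = (m P (m Q (m R T))) := final
        _ = m (m P Q) (m R T) := by simp only [hA]
    · intro e he a ⟨x, hax⟩
      have hea : m e a = a := by rw [hax, ← ha, ← ha, he]
      have hae : m a e = a := by rw [hax, ha, he]
      have hxxaRA : m a (m (st a) a) = a := by simpa only [hA] using hxx a
      have hxs : m (m (st a) a) (st a) = st a := by
        have h := hxx (st a); rw [hss] at h; exact h
      have h3 : ∀ t, m (st a) (m a (m (st a) t)) = m (st a) t := fun t => by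
        have := congrArg (fun z => m z t) hxs
        simpa only [hA] using this
      have haba : m (m a (m (m e (st a)) e)) a = a := by
        simp only [hA]
        rw [hea, tl ha hae]
        exact hxxaRA
      have hbab : m (m (m (m e (st a)) e) a) (m (m e (st a)) e)
          = m (m e (st a)) e := by
        simp only [hA]
        rw [tl ha hea, tl ha hae, h3]
      refine ⟨m (m e (st a)) e, ⟨⟨st a, rfl⟩, haba, hbab⟩, ?_⟩
      rintro c ⟨⟨y, hcy⟩, haca, hcac⟩
      obtain ⟨b, hbd⟩ : ∃ z : S, z = m (m e (st a)) e := ⟨_, rfl⟩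
      rw [← hbd] at haba hbab ⊢
      have heb : m e b = b := by rw [hbd, ← ha, ← ha, he]
      have hbe : m b e = b := by rw [hbd, ha, he]
      have hec : m e c = c := by rw [hcy, ← ha, ← ha, he]
      have hce : m c e = c := by rw [hcy, ha, he]
      have habRA : m a (m b a) = a := by simpa only [hA] using haba
      have hacRA : m a (m c a) = a := by simpa only [hA] using haca
      have hbabRA : m b (m a b) = b := by simpa only [hA] using hbab
      have hcacRA : m c (m a c) = c := by simpa only [hA] using hcac
      -- the four idempotents ba, ca, ab, ac
      have hIba : Idem m (m b a) := by
        show m (m b a) (m b a) = m b a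
        simp only [hA]; rw [habRA]
      have hIca : Idem m (m c a) := by
        show m (m c a) (m c a) = m c a
        simp only [hA]; rw [hacRA]
      have hIab : Idem m (m a b) := by
        show m (m a b) (m a b) = m a b
        simp only [hA]; rw [hbabRA]
      have hIac : Idem m (m a c) := by
        show m (m a c) (m a c) = m a c
        simp only [hA]; rw [hcacRA]
      have heba : m e (m b a) = m b a := by rw [← ha, heb]
      have hbae : m (m b a) e = m b a := by rw [ha, hae]
      have heca : m e (m c a) = m c a := by rw [← ha, hec]
      have hcae : m (m c a) e = m c a := by rw [ha, hae]
      have heab : m e (m a b) = m a b := by rw [← ha, hea]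
      have habe : m (m a b) e = m a b := by rw [ha, hbe]
      have heac : m e (m a c) = m a c := by rw [← ha, hea]
      have hace : m (m a c) e = m a c := by rw [ha, hce]
      have comm1 : m (m b a) (m c a) = m (m c a) (m b a) :=
        hypComm ha hxx hss hanti hyp he heba hbae hIba heca hcae hIca
      have comm2 : m (m a b) (m a c) = m (m a c) (m a b) :=
        hypComm ha hxx hss hanti hyp he heab habe hIab heac hace hIac
      have hcX : c = m c (m a b) := by
        calc c = m (m c a) c := hcac.symm
          _ = m c (m (m (m a b) a) c) := by rw [haba]; simp only [hA]
          _ = m c (m (m a b) (m a c)) := by simp only [hA]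
          _ = m c (m (m a c) (m a b)) := by rw [comm2]
          _ = m (m c (m a c)) (m a b) := by simp only [hA]
          _ = m c (m a b) := by rw [hcacRA]
      have hbX : b = m c (m a b) := by
        calc b = m (m b a) b := hbab.symm
          _ = m b (m (m (m a c) a) b) := by rw [haca]; simp only [hA]
          _ = m (m (m b a) (m c a)) b := by simp only [hA]
          _ = m (m (m c a) (m b a)) b := by rw [comm1]
          _ = m c (m a (m b (m a b))) := by simp only [hA]
          _ = m c (m a b) := by rw [hbabRA]
      exact hcX.trans hbX.symm
end

section
/- For a regular *-semigroup S, the following are equivalent: (1) S is completely regular, orthodox, and locally inverse; (2) S satisfies the identity xy = xxx*y; (3) S satisfies the identity xyz = xyxx*z. -/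
namespace S9

variable {S : Type*}

def o (m : S → S → S) : Option S → Option S → Option S
  | none, b => b
  | some a, none => some a
  | some a, some b => some (m a b)

def W (m : S → S → S) : List S → Option S
  | [] => none
  | a :: l => o m (some a) (W m l)

def barL (st : S → S) (l : List S) : List S := (l.map st).reverse

section

variable {m : S → S → S} {st : S → S}

lemma o_assoc (ha : ∀ a b c : S, m (m a b) c = m a (m b c)) : ∀ a b c : Option S, o m (o m a b) c = o m a (o m b c) := by
  intro a b c
  cases a <;> cases b <;> cases c <;> simp [o, ha]

lemma W_append (ha : ∀ a b c : S, m (m a b) c = m a (m b c)) : ∀ l1 l2 : List S, W m (l1 ++ l2) = o m (W m l1) (W m l2) := by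
  intro l1 l2
  induction l1 with
  | nil => simp [W, o]
  | cons a l ih =>
      show o m (some a) (W m (l ++ l2)) = o m (o m (some a) (W m l)) (W m l2)
      rw [ih, o_assoc ha]

lemma Wcongr (ha : ∀ a b c : S, m (m a b) c = m a (m b c)) {u v : List S} (h : W m u = W m v) (A B : List S) :
    W m (A ++ (u ++ B)) = W m (A ++ (v ++ B)) := by
  rw [W_append ha, W_append ha, W_append ha, W_append ha, h]

lemma W_bar (ha : ∀ a b c : S, m (m a b) c = m a (m b c)) (hanti : ∀ x y : S, st (m x y) = m (st y) (st x)) : ∀ l : List S, W m (barL st l) = (W m l).map st := by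
  intro l
  induction l with
  | nil => simp [W, barL]
  | cons a l ih =>
      have hb : barL st (a :: l) = barL st l ++ [st a] := by simp [barL]
      rw [hb, W_append ha, ih]
      show o m ((W m l).map st) (some (st a)) = (o m (some a) (W m l)).map st
      cases W m l with
      | none => simp [o]
      | some b => simp [o, hanti]

lemma W_isSome : ∀ l : List S, l ≠ [] → ∃ a, W m l = some a := by
  intro l hl
  cases l with
  | nil => exact absurd rfl hl
  | cons a l =>
      show ∃ b, o m (some a) (W m l) = some b
      cases W m l with
      | none => exact ⟨a, rfl⟩
      | some b => exact ⟨m a b, rfl⟩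

lemma Wreg (ha : ∀ a b c : S, m (m a b) c = m a (m b c)) (hreg : ∀ x : S, m (m x (st x)) x = x) (hanti : ∀ x y : S, st (m x y) = m (st y) (st x)) (l lb : List S) (hb : lb = barL st l) :
    W m (l ++ (lb ++ l)) = W m l := by
  subst hb
  rw [W_append ha, W_append ha, W_bar ha hanti]
  cases h : W m l with
  | none => simp [o]
  | some a =>
      show o m (some a) (o m (some (st a)) (some a)) = some a
      show some (m a (m (st a) a)) = some a
      rw [← ha]
      exact congrArg some (hreg a)

lemma Whyp2 (ha : ∀ a b c : S, m (m a b) c = m a (m b c)) (hanti : ∀ x y : S, st (m x y) = m (st y) (st x)) (h2 : ∀ x y : S, m x y = m (m (m x x) (st x)) y)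
    (l lb q : List S) (hq : q ≠ []) (hb : lb = barL st l) :
    W m (l ++ q) = W m (l ++ (l ++ (lb ++ q))) := by
  subst hb
  obtain ⟨b, hbq⟩ := W_isSome q hq
  rw [W_append ha, W_append ha, W_append ha, W_append ha, W_bar ha hanti, hbq]
  cases h : W m l with
  | none => simp [o]
  | some a =>
      show some (m a b) = o m (some a) (o m (some a) (o m (some (st a)) (some b)))
      show some (m a b) = some (m a (m a (m (st a) b)))
      have h' := h2 a b
      rw [ha, ha] at h'
      exact congrArg some h'

lemma h2R (ha : ∀ a b c : S, m (m a b) c = m a (m b c)) (hss : ∀ x : S, st (st x) = x) (hanti : ∀ x y : S, st (m x y) = m (st y) (st x)) (h2 : ∀ x y : S, m x y = m (m (m x x) (st x)) y) :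
    ∀ a b : S, m b a = m (m (m b (st a)) a) a := by
  intro a b
  have h := congrArg st (h2 (st a) (st b))
  simp only [hanti, hss] at h
  rw [ha, ha]
  exact h

lemma Whyp2R (ha : ∀ a b c : S, m (m a b) c = m a (m b c)) (hss : ∀ x : S, st (st x) = x) (hanti : ∀ x y : S, st (m x y) = m (st y) (st x)) (h2 : ∀ x y : S, m x y = m (m (m x x) (st x)) y)
    (l lb q : List S) (hq : q ≠ []) (hb : lb = barL st l) :
    W m (q ++ l) = W m (q ++ (lb ++ (l ++ l))) := by
  subst hb
  obtain ⟨b, hbq⟩ := W_isSome q hq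
  rw [W_append ha, W_append ha, W_append ha, W_append ha, W_bar ha hanti, hbq]
  cases h : W m l with
  | none => simp [o]
  | some a =>
      show some (m b a) = o m (some b) (o m (some (st a)) (o m (some a) (some a)))
      show some (m b a) = some (m b (m (st a) (m a a)))
      have h' := h2R ha hss hanti h2 a b
      rw [ha, ha] at h'
      exact congrArg some h'

lemma Wcr (ha : ∀ a b c : S, m (m a b) c = m a (m b c)) (hanti : ∀ x y : S, st (m x y) = m (st y) (st x)) (c1 : ∀ x : S, m x (st x) = m (m x x) (m (st x) (st x)))
    (l lb : List S) (hb : lb = barL st l) :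
    W m (l ++ lb) = W m (l ++ (l ++ (lb ++ lb))) := by
  subst hb
  rw [W_append ha, W_append ha, W_append ha, W_append ha, W_bar ha hanti]
  cases h : W m l with
  | none => simp [o]
  | some a =>
      show some (m a (st a)) = some (m a (m a (m (st a) (st a))))
      have h' := c1 a
      rw [ha] at h'
      exact congrArg some h'

lemma prodIdem (horth : Orthodox m) :
    ∀ (l : List S), (∀ x ∈ l, Idem m x) → ∀ a, W m l = some a → Idem m a := by
  intro l
  induction l with
  | nil => intro _ a h; exact absurd h (by simp [W])
  | cons x l ih =>
      intro hl a h
      have hx : Idem m x := hl x (by simp)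
      cases hw : W m l with
      | none =>
          have : W m (x :: l) = some x := by show o m (some x) (W m l) = some x; rw [hw]; rfl
          rw [this] at h
          exact (Option.some.inj h) ▸ hx
      | some b =>
          have hb : Idem m b := ih (fun z hz => hl z (by simp [hz])) b hw
          have : W m (x :: l) = some (m x b) := by
            show o m (some x) (W m l) = some (m x b); rw [hw]; rfl
          rw [this] at h
          exact (Option.some.inj h) ▸ horth x b hx hb

lemma WO (ha : ∀ a b c : S, m (m a b) c = m a (m b c)) (horth : Orthodox m) (l : List S) (hl : ∀ x ∈ l, Idem m x) :
    W m (l ++ l) = W m l := by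
  rw [W_append ha]
  cases h : W m l with
  | none => simp [o]
  | some a =>
      show some (m a a) = some a
      exact congrArg some (prodIdem horth l hl a h)

end

def LComm {S : Type*} (m : S → S → S) : Prop :=
  ∀ e u v : S, Idem m e → Idem m u → Idem m v → m e u = u → m u e = u →
    m e v = v → m v e = v → m u v = m v u

section

variable {m : S → S → S} {st : S → S}
variable (ha : ∀ a b c : S, m (m a b) c = m a (m b c))

lemma WC (ha : ∀ a b c : S, m (m a b) c = m a (m b c)) (horth : Orthodox m) (hlc : LComm m) (p A B : List S)
    (hp : p ≠ []) (hA : A ≠ []) (hB : B ≠ [])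
    (hip : ∀ x ∈ p, Idem m x) (hiA : ∀ x ∈ A, Idem m x) (hiB : ∀ x ∈ B, Idem m x) :
    W m (p ++ (A ++ (p ++ (B ++ p)))) = W m (p ++ (B ++ (p ++ (A ++ p)))) := by
  obtain ⟨P, hP⟩ := W_isSome p hp
  obtain ⟨a, haA⟩ := W_isSome A hA
  obtain ⟨b, hbB⟩ := W_isSome B hB
  have IP : Idem m P := prodIdem horth p hip P hP
  have Ia : Idem m a := prodIdem horth A hiA a haA
  have Ib : Idem m b := prodIdem horth B hiB b hbB
  have IPe : m P P = P := IP
  have IP' : ∀ w, m P (m P w) = m P w := fun w => by rw [← ha, IPe]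
  rw [W_append ha, W_append ha, W_append ha, W_append ha,
      W_append ha, W_append ha, W_append ha, W_append ha, hP, haA, hbB]
  show some (m P (m a (m P (m b P)))) = some (m P (m b (m P (m a P))))
  set u := m (m P a) P with hu
  set v := m (m P b) P with hv
  have Iu : Idem m u := horth _ _ (horth P a IP Ia) IP
  have Iv : Idem m v := horth _ _ (horth P b IP Ib) IP
  have h1 : m P u = u := by rw [hu]; simp only [ha, IPe, IP']
  have h2 : m u P = u := by rw [hu]; simp only [ha, IPe, IP']
  have h3 : m P v = v := by rw [hv]; simp only [ha, IPe, IP']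
  have h4 : m v P = v := by rw [hv]; simp only [ha, IPe, IP']
  have h5 : m u v = m v u := hlc P u v IP Iu Iv h1 h2 h3 h4
  have e1 : m u v = m P (m a (m P (m b P))) := by
    rw [hu, hv]; simp only [ha, IP']
  have e2 : m v u = m P (m b (m P (m a P))) := by
    rw [hu, hv]; simp only [ha, IP']
  rw [← e1, ← e2, h5]

end

end S9

namespace S9

section

variable {S : Type*} {m : S → S → S} {st : S → S}

lemma RrelStar (ha : ∀ a b c : S, m (m a b) c = m a (m b c))
    (hreg : ∀ x : S, m (m x (st x)) x = x)
    (hss : ∀ x : S, st (st x) = x)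
    (hanti : ∀ x y : S, st (m x y) = m (st y) (st x))
    {a b : S} (hGR : GreenR m a b) : m a (st a) = m b (st b) := by
  rcases hGR with rfl | ⟨u, v, hau, hbv⟩
  · rfl
  · have hqa : m (m b (st b)) a = a := by
      calc m (m b (st b)) a = m (m b (st b)) (m b u) := by rw [← hau]
        _ = m (m (m b (st b)) b) u := (ha _ _ _).symm
        _ = m b u := by rw [hreg]
        _ = a := hau.symm
    have hpb : m (m a (st a)) b = b := by
      calc m (m a (st a)) b = m (m a (st a)) (m a v) := by rw [← hbv]
        _ = m (m (m a (st a)) a) v := (ha _ _ _).symm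
        _ = m a v := by rw [hreg]
        _ = b := hbv.symm
    have h1 : m (m b (st b)) (m a (st a)) = m a (st a) := by
      rw [← ha, hqa]
    have h2 : m (m a (st a)) (m b (st b)) = m b (st b) := by
      rw [← ha, hpb]
    have hps : st (m a (st a)) = m a (st a) := by rw [hanti, hss]
    have hqs : st (m b (st b)) = m b (st b) := by rw [hanti, hss]
    calc m a (st a) = st (m a (st a)) := hps.symm
      _ = st (m (m b (st b)) (m a (st a))) := by rw [h1]
      _ = m (st (m a (st a))) (st (m b (st b))) := hanti _ _
      _ = m (m a (st a)) (m b (st b)) := by rw [hps, hqs]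
      _ = m b (st b) := h2

lemma LrelStar (ha : ∀ a b c : S, m (m a b) c = m a (m b c))
    (hreg : ∀ x : S, m (m x (st x)) x = x)
    (hss : ∀ x : S, st (st x) = x)
    (hanti : ∀ x y : S, st (m x y) = m (st y) (st x))
    {a b : S} (hGL : GreenL m a b) : m (st a) a = m (st b) b := by
  have hGR : GreenR m (st a) (st b) := by
    rcases hGL with rfl | ⟨u, v, hau, hbv⟩
    · exact Or.inl rfl
    · refine Or.inr ⟨st u, st v, ?_, ?_⟩
      · rw [hau, hanti]
      · rw [hbv, hanti]
  have := RrelStar ha hreg hss hanti hGR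
  rw [hss, hss] at this
  exact this

lemma cr_c1 (ha : ∀ a b c : S, m (m a b) c = m a (m b c))
    (hreg : ∀ x : S, m (m x (st x)) x = x)
    (hss : ∀ x : S, st (st x) = x)
    (hanti : ∀ x y : S, st (m x y) = m (st y) (st x))
    (hcr : CompletelyRegular m) :
    ∀ x : S, m x (st x) = m (m x x) (m (st x) (st x)) := by
  intro x
  have h := RrelStar ha hreg hss hanti (hcr x).2
  rw [hanti] at h
  exact h

lemma cr_c2 (ha : ∀ a b c : S, m (m a b) c = m a (m b c))
    (hreg : ∀ x : S, m (m x (st x)) x = x)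
    (hss : ∀ x : S, st (st x) = x)
    (hanti : ∀ x y : S, st (m x y) = m (st y) (st x))
    (hcr : CompletelyRegular m) :
    ∀ x : S, m (st x) x = m (m (st x) (st x)) (m x x) := by
  intro x
  have h := LrelStar ha hreg hss hanti (hcr x).1
  rw [hanti] at h
  exact h

/-- In `eSe`, products with `e` absorb. -/
lemma memSand (ha : ∀ a b c : S, m (m a b) c = m a (m b c))
    {e w : S} (h1 : m e w = w) (h2 : m w e = w) : ∃ x : S, w = m (m e x) e := by
  exact ⟨w, by rw [h1, h2]⟩

lemma locIdem (ha : ∀ a b c : S, m (m a b) c = m a (m b c))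
    (hloc : LocallyInverse m) (e u v : S)
    (he : Idem m e) (hu : Idem m u) (hv : Idem m v)
    (heu : m e u = u) (hue : m u e = u)
    (hev : m e v = v) (hve : m v e = v) : Idem m (m u v) := by
  have hu' : ∀ w, m u (m u w) = m u w := fun w => by rw [← ha]; rw [show m u u = u from hu]
  have hv' : ∀ w, m v (m v w) = m v w := fun w => by rw [← ha]; rw [show m v v = v from hv]
  have hea : m e (m u v) = m u v := by rw [← ha, heu]
  have hae : m (m u v) e = m u v := by rw [ha, hve]
  obtain ⟨b, ⟨hbmem, hb1, hb2⟩, hbuniq⟩ := hloc e he (m u v) (memSand ha hea hae)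
  obtain ⟨x0, hx0⟩ := hbmem
  have heb : m e b = b := by rw [hx0, ← ha, ← ha, he]
  have hbe : m b e = b := by rw [hx0, ha, he]
  have hb1' : m u (m v (m b (m u v))) = m u v := by
    have h := hb1; simp only [ha] at h; exact h
  have hb2'' : m b (m u (m v (m b u))) = m b u := by
    have h := congrArg (fun w => m w u) hb2
    simp only [ha] at h
    exact h
  -- the element (v b) u is also an inverse of (u v) in eSe
  have hcmem : ∃ x : S, m (m v b) u = m (m e x) e := by
    apply memSand ha
    · simp only [ha]; rw [← ha, hev]
    · simp only [ha]; rw [hue]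
  have hA1 : m (m (m u v) (m (m v b) u)) (m u v) = m u v := by
    simp only [ha, hu', hv']
    exact hb1'
  have hA2 : m (m (m (m v b) u) (m u v)) (m (m v b) u) = m (m v b) u := by
    simp only [ha, hu', hv']
    rw [hb2'']
  have hcb : m (m v b) u = b := hbuniq _ ⟨hcmem, hA1, hA2⟩
  have hcc : m (m (m v b) u) (m (m v b) u) = m (m v b) u := by
    simp only [ha, hu', hv']
    rw [hb2'']
  have hbb : m b b = b := by
    calc m b b = m (m (m v b) u) (m (m v b) u) := by rw [hcb]
      _ = m (m v b) u := hcc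
      _ = b := hcb
  obtain ⟨b2, _, huniq2⟩ := hloc e he b (memSand ha heb hbe)
  have e1 : m u v = b2 := huniq2 _ ⟨memSand ha hea hae, hb2, hb1⟩
  have e2 : b = b2 := huniq2 _ ⟨memSand ha heb hbe, by rw [hbb, hbb], by rw [hbb, hbb]⟩
  have huvb : m u v = b := e1.trans e2.symm
  show m (m u v) (m u v) = m u v
  rw [huvb]
  exact hbb

lemma locComm (ha : ∀ a b c : S, m (m a b) c = m a (m b c))
    (hloc : LocallyInverse m) : LComm m := by
  intro e u v he hu hv heu hue hev hve
  have hu' : ∀ w, m u (m u w) = m u w := fun w => by rw [← ha]; rw [show m u u = u from hu]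
  have hv' : ∀ w, m v (m v w) = m v w := fun w => by rw [← ha]; rw [show m v v = v from hv]
  have Iuv : Idem m (m u v) := locIdem ha hloc e u v he hu hv heu hue hev hve
  have Ivu : Idem m (m v u) := locIdem ha hloc e v u he hv hu hev hve heu hue
  have Iuv' : m u (m v (m u v)) = m u v := by
    have h : m (m u v) (m u v) = m u v := Iuv
    simp only [ha] at h; exact h
  have Ivu' : m v (m u (m v u)) = m v u := by
    have h : m (m v u) (m v u) = m v u := Ivu
    simp only [ha] at h; exact h
  have hea : m e (m u v) = m u v := by rw [← ha, heu]
  have hae : m (m u v) e = m u v := by rw [ha, hve]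
  have heb : m e (m v u) = m v u := by rw [← ha, hev]
  have hbe : m (m v u) e = m v u := by rw [ha, hue]
  obtain ⟨b3, _, huniq3⟩ := hloc e he (m u v) (memSand ha hea hae)
  have c1a : m (m (m u v) (m v u)) (m u v) = m u v := by
    simp only [ha, hu', hv']
    exact Iuv'
  have c1b : m (m (m v u) (m u v)) (m v u) = m v u := by
    simp only [ha, hu', hv']
    exact Ivu'
  have e1 : m v u = b3 := huniq3 _ ⟨memSand ha heb hbe, c1a, c1b⟩
  have e2 : m u v = b3 := huniq3 _ ⟨memSand ha hea hae,
    by rw [show m (m u v) (m u v) = m u v from Iuv,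
            show m (m u v) (m u v) = m u v from Iuv],
    by rw [show m (m u v) (m u v) = m u v from Iuv,
            show m (m u v) (m u v) = m u v from Iuv]⟩
  exact e2.trans e1.symm

end

end S9

namespace S9Gen
open S9

lemma gen_orth {S : Type*} {m : S → S → S} {st : S → S}
    (ha : ∀ a b c : S, m (m a b) c = m a (m b c))
    (hreg : ∀ x : S, m (m x (st x)) x = x)
    (hss : ∀ x : S, st (st x) = x)
    (hanti : ∀ x y : S, st (m x y) = m (st y) (st x))
    (h2 : ∀ x y : S, m x y = m (m (m x x) (st x)) y)
    (e f : S)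
    (gee : S9.W m [e, e] = S9.W m [e]) (gff : S9.W m [f, f] = S9.W m [f])
    (gEE : S9.W m [st e, st e] = S9.W m [st e]) (gFF : S9.W m [st f, st f] = S9.W m [st f]) :
    S9.W m [e, f, e, f] = S9.W m [e, f] := by
  have s0 : S9.W m [e, f, e, f] = S9.W m [e, f, f, (st f), e, f] :=
    S9.Wcongr ha (S9.Whyp2 ha hanti h2 [f] [(st f)] [e] (by simp) (by simp [S9.barL, hss])) [e] [f]
  have s1 : S9.W m [e, f, f, (st f), e, f] = S9.W m [e, f, (st f), e, f] :=
    S9.Wcongr ha (gff) [e] [(st f), e, f]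
  have s2 : S9.W m [e, f, (st f), e, f] = S9.W m [e, f, (st f), (st e), e, e, f] :=
    S9.Wcongr ha (S9.Whyp2R ha hss hanti h2 [e] [(st e)] [(st f)] (by simp) (by simp [S9.barL, hss])) [e, f] [f]
  have s3 : S9.W m [e, f, (st f), (st e), e, e, f] = S9.W m [e, f, (st f), (st e), e, f] :=
    S9.Wcongr ha (gee) [e, f, (st f), (st e)] [f]
  have s4 : S9.W m [e, f, (st f), (st e), e, f] = S9.W m [e, f] :=
    S9.Wcongr ha (S9.Wreg ha hreg hanti [e, f] [(st f), (st e)] (by simp [S9.barL, hss])) [] []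
  exact s0.trans (s1.trans (s2.trans (s3.trans (s4))))

lemma gen_L4 {S : Type*} {m : S → S → S} {st : S → S}
    (ha : ∀ a b c : S, m (m a b) c = m a (m b c))
    (hreg : ∀ x : S, m (m x (st x)) x = x)
    (hss : ∀ x : S, st (st x) = x)
    (hanti : ∀ x y : S, st (m x y) = m (st y) (st x))
    (h2 : ∀ x y : S, m x y = m (m (m x x) (st x)) y)
    (e g h : S)
    (gee : S9.W m [e, e] = S9.W m [e]) (ggg : S9.W m [g, g] = S9.W m [g]) (ghh : S9.W m [h, h] = S9.W m [h])
    (gEE : S9.W m [st e, st e] = S9.W m [st e]) (gGG : S9.W m [st g, st g] = S9.W m [st g]) (gHH : S9.W m [st h, st h] = S9.W m [st h])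
    (geg : S9.W m [e, g] = S9.W m [g]) (gge : S9.W m [g, e] = S9.W m [g])
    (gGE : S9.W m [st g, st e] = S9.W m [st g]) (gEG : S9.W m [st e, st g] = S9.W m [st g])
    (geh : S9.W m [e, h] = S9.W m [h]) (ghe : S9.W m [h, e] = S9.W m [h])
    (gHE : S9.W m [st h, st e] = S9.W m [st h]) (gEH : S9.W m [st e, st h] = S9.W m [st h]) :
    S9.W m [g, h] = S9.W m [h, g] := by
  have s0 : S9.W m [g, h] = S9.W m [e, g, h] :=
    S9.Wcongr ha (geg).symm [] [h]
  have s1 : S9.W m [e, g, h] = S9.W m [e, (st h), (st g), g, h, g, h] :=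
    S9.Wcongr ha (S9.Whyp2R ha hss hanti h2 [g, h] [(st h), (st g)] [e] (by simp) (by simp [S9.barL, hss])) [] []
  have s2 : S9.W m [e, (st h), (st g), g, h, g, h] = S9.W m [e, h, (st h), (st h), (st g), g, h, g, h] :=
    S9.Wcongr ha (S9.Whyp2R ha hss hanti h2 [(st h)] [h] [e] (by simp) (by simp [S9.barL, hss])) [] [(st g), g, h, g, h]
  have s3 : S9.W m [e, h, (st h), (st h), (st g), g, h, g, h] = S9.W m [e, h, (st h), g, h] :=
    S9.Wcongr ha (S9.Whyp2R ha hss hanti h2 [g, h] [(st h), (st g)] [(st h)] (by simp) (by simp [S9.barL, hss])).symm [e, h] []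
  have s4 : S9.W m [e, h, (st h), g, h] = S9.W m [e, h, (st h), g, (st h), g, (st g), h, h] :=
    S9.Wcongr ha (S9.Whyp2 ha hanti h2 [(st h), g] [(st g), h] [h] (by simp) (by simp [S9.barL, hss])) [e, h] []
  have s5 : S9.W m [e, h, (st h), g, (st h), g, (st g), h, h] = S9.W m [e, h, (st h), g, (st h), g, (st g), h] :=
    S9.Wcongr ha (ghh) [e, h, (st h), g, (st h), g, (st g)] []
  have s6 : S9.W m [e, h, (st h), g, (st h), g, (st g), h] = S9.W m [e, h, (st h), g, (st h), g, (st g), h, e] :=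
    S9.Wcongr ha (ghe).symm [e, h, (st h), g, (st h), g, (st g)] []
  have s7 : S9.W m [e, h, (st h), g, (st h), g, (st g), h, e] = S9.W m [e, h, (st h), g, e] :=
    S9.Wcongr ha (S9.Whyp2 ha hanti h2 [(st h), g] [(st g), h] [e] (by simp) (by simp [S9.barL, hss])).symm [e, h] []
  have s8 : S9.W m [e, h, (st h), g, e] = S9.W m [e, h, h, (st h), g, e] :=
    S9.Wcongr ha (ghh).symm [e] [(st h), g, e]
  have s9 : S9.W m [e, h, h, (st h), g, e] = S9.W m [e, h, h, (st h), g] :=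
    S9.Wcongr ha (gge) [e, h, h, (st h)] []
  have s10 : S9.W m [e, h, h, (st h), g] = S9.W m [e, h, g] :=
    S9.Wcongr ha (S9.Whyp2 ha hanti h2 [h] [(st h)] [g] (by simp) (by simp [S9.barL, hss])).symm [e] []
  have s11 : S9.W m [e, h, g] = S9.W m [h, g] :=
    S9.Wcongr ha (geh) [] [g]
  exact s0.trans (s1.trans (s2.trans (s3.trans (s4.trans (s5.trans (s6.trans (s7.trans (s8.trans (s9.trans (s10.trans (s11)))))))))))

lemma gen_23 {S : Type*} {m : S → S → S} {st : S → S}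
    (ha : ∀ a b c : S, m (m a b) c = m a (m b c))
    (hreg : ∀ x : S, m (m x (st x)) x = x)
    (hss : ∀ x : S, st (st x) = x)
    (hanti : ∀ x y : S, st (m x y) = m (st y) (st x))
    (h2 : ∀ x y : S, m x y = m (m (m x x) (st x)) y)
    (x y z : S) :
    S9.W m [x, y, z] = S9.W m [x, y, x, (st x), z] := by
  have s0 : S9.W m [x, y, z] = S9.W m [x, y, x, y, (st y), (st x), z] :=
    S9.Wcongr ha (S9.Whyp2 ha hanti h2 [x, y] [(st y), (st x)] [z] (by simp) (by simp [S9.barL, hss])) [] []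
  have s1 : S9.W m [x, y, x, y, (st y), (st x), z] = S9.W m [x, y, x, y, (st y), (st x), x, (st x), z] :=
    S9.Wcongr ha (S9.Wreg ha hreg hanti [(st x)] [x] (by simp [S9.barL, hss])).symm [x, y, x, y, (st y)] [z]
  have s2 : S9.W m [x, y, x, y, (st y), (st x), x, (st x), z] = S9.W m [x, y, x, (st x), z] :=
    S9.Wcongr ha (S9.Whyp2 ha hanti h2 [x, y] [(st y), (st x)] [x] (by simp) (by simp [S9.barL, hss])).symm [] [(st x), z]
  exact s0.trans (s1.trans (s2))

lemma gen_exist1 {S : Type*} {m : S → S → S} {st : S → S}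
    (ha : ∀ a b c : S, m (m a b) c = m a (m b c))
    (hreg : ∀ x : S, m (m x (st x)) x = x)
    (hss : ∀ x : S, st (st x) = x)
    (hanti : ∀ x y : S, st (m x y) = m (st y) (st x))
    (a e : S) (gea : S9.W m [e, a] = S9.W m [a]) (gae : S9.W m [a, e] = S9.W m [a]) :
    S9.W m [a, e, (st a), e, a] = S9.W m [a] := by
  have s0 : S9.W m [a, e, (st a), e, a] = S9.W m [a, (st a), e, a] :=
    S9.Wcongr ha (gae) [] [(st a), e, a]
  have s1 : S9.W m [a, (st a), e, a] = S9.W m [a, (st a), a] :=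
    S9.Wcongr ha (gea) [a, (st a)] []
  have s2 : S9.W m [a, (st a), a] = S9.W m [a] :=
    S9.Wcongr ha (S9.Wreg ha hreg hanti [a] [(st a)] (by simp [S9.barL, hss])) [] []
  exact s0.trans (s1.trans (s2))

lemma gen_exist2 {S : Type*} {m : S → S → S} {st : S → S}
    (ha : ∀ a b c : S, m (m a b) c = m a (m b c))
    (hreg : ∀ x : S, m (m x (st x)) x = x)
    (hss : ∀ x : S, st (st x) = x)
    (hanti : ∀ x y : S, st (m x y) = m (st y) (st x))
    (a e : S) (gea : S9.W m [e, a] = S9.W m [a]) (gae : S9.W m [a, e] = S9.W m [a]) :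
    S9.W m [e, (st a), e, a, e, (st a), e] = S9.W m [e, (st a), e] := by
  have s0 : S9.W m [e, (st a), e, a, e, (st a), e] = S9.W m [e, (st a), a, e, (st a), e] :=
    S9.Wcongr ha (gea) [e, (st a)] [e, (st a), e]
  have s1 : S9.W m [e, (st a), a, e, (st a), e] = S9.W m [e, (st a), a, (st a), e] :=
    S9.Wcongr ha (gae) [e, (st a)] [(st a), e]
  have s2 : S9.W m [e, (st a), a, (st a), e] = S9.W m [e, (st a), e] :=
    S9.Wcongr ha (S9.Wreg ha hreg hanti [(st a)] [a] (by simp [S9.barL, hss])) [e] [e]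
  exact s0.trans (s1.trans (s2))

lemma gen_G1 {S : Type*} {m : S → S → S} {st : S → S}
    (ha : ∀ a b c : S, m (m a b) c = m a (m b c))
    (hreg : ∀ x : S, m (m x (st x)) x = x)
    (hss : ∀ x : S, st (st x) = x)
    (hanti : ∀ x y : S, st (m x y) = m (st y) (st x))
    (c1 : ∀ x : S, m x (st x) = m (m x x) (m (st x) (st x)))
    (x : S) :
    S9.W m [(st x), x, x, (st x), (st x), x] = S9.W m [(st x), x] := by
  have s0 : S9.W m [(st x), x, x, (st x), (st x), x] = S9.W m [(st x), x, (st x), x] :=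
    S9.Wcongr ha (S9.Wcr ha hanti c1 [x] [(st x)] (by simp [S9.barL, hss])).symm [(st x)] [x]
  have s1 : S9.W m [(st x), x, (st x), x] = S9.W m [(st x), x] :=
    S9.Wcongr ha (S9.Wreg ha hreg hanti [(st x)] [x] (by simp [S9.barL, hss])) [] [x]
  exact s0.trans (s1)

lemma gen_G2 {S : Type*} {m : S → S → S} {st : S → S}
    (ha : ∀ a b c : S, m (m a b) c = m a (m b c))
    (hreg : ∀ x : S, m (m x (st x)) x = x)
    (hss : ∀ x : S, st (st x) = x)
    (hanti : ∀ x y : S, st (m x y) = m (st y) (st x))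
    (c1 : ∀ x : S, m x (st x) = m (m x x) (m (st x) (st x)))
    (x : S) :
    S9.W m [x, (st x), (st x), x, x, (st x)] = S9.W m [x, (st x)] := by
  have s0 : S9.W m [x, (st x), (st x), x, x, (st x)] = S9.W m [x, (st x), x, (st x)] :=
    S9.Wcongr ha (S9.Wcr ha hanti c1 [(st x)] [x] (by simp [S9.barL, hss])).symm [x] [(st x)]
  have s1 : S9.W m [x, (st x), x, (st x)] = S9.W m [x, (st x)] :=
    S9.Wcongr ha (S9.Wreg ha hreg hanti [x] [(st x)] (by simp [S9.barL, hss])) [] [(st x)]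
  exact s0.trans (s1)

lemma gen_band {S : Type*} {m : S → S → S}
    (ha : ∀ a b c : S, m (m a b) c = m a (m b c))
    (horth : Orthodox m) (hlc : S9.LComm m)
    (e f g : S) (he : Idem m e) (hf : Idem m f) (hg : Idem m g)
    (gefe : S9.W m [e, f, e] = S9.W m [e]) (gfef : S9.W m [f, e, f] = S9.W m [f]) :
    S9.W m [e, f, g] = S9.W m [e, g] := by
  have s0 : S9.W m [e, f, g] = S9.W m [e, f, g, e, f, g] :=
    S9.Wcongr ha (S9.WO ha horth [e, f, g] (by intro zz hzz; fin_cases hzz <;> assumption)).symm [] []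
  have s1 : S9.W m [e, f, g, e, f, g] = S9.W m [e, f, g, e, g, e, f, g] :=
    S9.Wcongr ha (S9.WO ha horth [g, e] (by intro zz hzz; fin_cases hzz <;> assumption)).symm [e, f] [f, g]
  have s2 : S9.W m [e, f, g, e, g, e, f, g] = S9.W m [e, g, e, f, g, e, f, g] :=
    S9.Wcongr ha (S9.WC ha horth hlc [e] [f, g] [g] (by simp) (by simp) (by simp) (by intro zz hzz; fin_cases hzz <;> assumption) (by intro zz hzz; fin_cases hzz <;> assumption) (by intro zz hzz; fin_cases hzz <;> assumption)) [] [f, g]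
  have s3 : S9.W m [e, g, e, f, g, e, f, g] = S9.W m [e, g, e, f, g] :=
    S9.Wcongr ha (S9.WO ha horth [g, e, f] (by intro zz hzz; fin_cases hzz <;> assumption)) [e] [g]
  have s4 : S9.W m [e, g, e, f, g] = S9.W m [e, g, e, f, e, g, e, f, g] :=
    S9.Wcongr ha (S9.WO ha horth [e, g, e, f] (by intro zz hzz; fin_cases hzz <;> assumption)).symm [] [g]
  have s5 : S9.W m [e, g, e, f, e, g, e, f, g] = S9.W m [e, g, e, f, g, e, f, e, g] :=
    S9.Wcongr ha (S9.WC ha horth hlc [g] [e, f, e] [e, f] (by simp) (by simp) (by simp) (by intro zz hzz; fin_cases hzz <;> assumption) (by intro zz hzz; fin_cases hzz <;> assumption) (by intro zz hzz; fin_cases hzz <;> assumption)) [e] []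
  have s6 : S9.W m [e, g, e, f, g, e, f, e, g] = S9.W m [e, g, e, f, e, g] :=
    S9.Wcongr ha (S9.WO ha horth [g, e, f] (by intro zz hzz; fin_cases hzz <;> assumption)) [e] [e, g]
  have s7 : S9.W m [e, g, e, f, e, g] = S9.W m [e, g, e, g] :=
    S9.Wcongr ha (gefe) [e, g] [g]
  have s8 : S9.W m [e, g, e, g] = S9.W m [e, g] :=
    S9.Wcongr ha (S9.WO ha horth [e, g] (by intro zz hzz; fin_cases hzz <;> assumption)) [] []
  exact s0.trans (s1.trans (s2.trans (s3.trans (s4.trans (s5.trans (s6.trans (s7.trans (s8))))))))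

lemma gen_uniq {S : Type*} {m : S → S → S}
    (ha : ∀ a b c : S, m (m a b) c = m a (m b c))
    (a b d : S)
    (gaba : S9.W m [a, b, a] = S9.W m [a]) (gada : S9.W m [a, d, a] = S9.W m [a])
    (gbab : S9.W m [b, a, b] = S9.W m [b]) (gdad : S9.W m [d, a, d] = S9.W m [d])
    (gcomm1 : S9.W m [a, b, a, d] = S9.W m [a, d, a, b])
    (gcomm2 : S9.W m [b, a, d, a] = S9.W m [d, a, b, a]) :
    S9.W m [d] = S9.W m [b] := by
  have s0 : S9.W m [d] = S9.W m [d, a, d] :=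
    S9.Wcongr ha (gdad).symm [] []
  have s1 : S9.W m [d, a, d] = S9.W m [d, a, b, a, d] :=
    S9.Wcongr ha (gaba).symm [d] [d]
  have s2 : S9.W m [d, a, b, a, d] = S9.W m [b, a, d, a, d] :=
    S9.Wcongr ha (gcomm2).symm [] [d]
  have s3 : S9.W m [b, a, d, a, d] = S9.W m [b, a, d] :=
    S9.Wcongr ha (gada) [b] [d]
  have s4 : S9.W m [b, a, d] = S9.W m [b, a, b, a, d] :=
    S9.Wcongr ha (gaba).symm [b] [d]
  have s5 : S9.W m [b, a, b, a, d] = S9.W m [b, a, d, a, b] :=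
    S9.Wcongr ha (gcomm1) [b] []
  have s6 : S9.W m [b, a, d, a, b] = S9.W m [b, a, b] :=
    S9.Wcongr ha (gada) [b] [b]
  have s7 : S9.W m [b, a, b] = S9.W m [b] :=
    S9.Wcongr ha (gbab) [] []
  exact s0.trans (s1.trans (s2.trans (s3.trans (s4.trans (s5.trans (s6.trans (s7)))))))

lemma gen_main {S : Type*} {m : S → S → S} {st : S → S}
    (ha : ∀ a b c : S, m (m a b) c = m a (m b c))
    (hreg : ∀ x : S, m (m x (st x)) x = x)
    (hss : ∀ x : S, st (st x) = x)
    (hanti : ∀ x y : S, st (m x y) = m (st y) (st x))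
    (x y : S)
    (gband : S9.W m [st x, x, x, st x, y, st y] = S9.W m [st x, x, y, st y]) :
    S9.W m [x, x, (st x), y] = S9.W m [x, y] := by
  have s0 : S9.W m [x, x, (st x), y] = S9.W m [x, (st x), x, x, (st x), y] :=
    S9.Wcongr ha (S9.Wreg ha hreg hanti [x] [(st x)] (by simp [S9.barL, hss])).symm [] [x, (st x), y]
  have s1 : S9.W m [x, (st x), x, x, (st x), y] = S9.W m [x, (st x), x, x, (st x), y, (st y), y] :=
    S9.Wcongr ha (S9.Wreg ha hreg hanti [y] [(st y)] (by simp [S9.barL, hss])).symm [x, (st x), x, x, (st x)] []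
  have s2 : S9.W m [x, (st x), x, x, (st x), y, (st y), y] = S9.W m [x, (st x), x, y, (st y), y] :=
    S9.Wcongr ha (gband) [x] [y]
  have s3 : S9.W m [x, (st x), x, y, (st y), y] = S9.W m [x, y, (st y), y] :=
    S9.Wcongr ha (S9.Wreg ha hreg hanti [x] [(st x)] (by simp [S9.barL, hss])) [] [y, (st y), y]
  have s4 : S9.W m [x, y, (st y), y] = S9.W m [x, y] :=
    S9.Wcongr ha (S9.Wreg ha hreg hanti [y] [(st y)] (by simp [S9.barL, hss])) [x] []
  exact s0.trans (s1.trans (s2.trans (s3.trans (s4))))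

end S9Gen

theorem stmt9 {S : Type*} (m : S → S → S) (st : S → S)
    (hS : RegStar m st) :
    ((CompletelyRegular m ∧ Orthodox m ∧ LocallyInverse m) ↔
      (∀ x y : S, m x y = m (m (m x x) (st x)) y)) ∧
    ((∀ x y : S, m x y = m (m (m x x) (st x)) y) ↔
      (∀ x y z : S, m (m x y) z = m (m (m (m x y) x) (st x)) z)) := by
  obtain ⟨ha0, hreg, hss, hanti⟩ := hS
  have ha : ∀ a b c : S, m (m a b) c = m a (m b c) := ha0
  have hxx : ∀ x : S, m x (m (st x) x) = x := fun x => by rw [← ha]; exact hreg x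
  constructor
  · constructor
    · -- (1) ⇒ (2)
      rintro ⟨hcr, horth, hloc⟩ x y
      have c1 := S9.cr_c1 ha hreg hss hanti hcr
      have hlc : S9.LComm m := S9.locComm ha hloc
      have g1 := S9Gen.gen_G1 ha hreg hss hanti c1 x
      have g2 := S9Gen.gen_G2 ha hreg hss hanti c1 x
      have hE : Idem m (m (st x) x) := by
        show m (m (st x) x) (m (st x) x) = m (st x) x
        rw [ha, hxx x]
      have hFgen : ∀ z : S, Idem m (m z (st z)) := by
        intro z
        have h : m (st z) (m z (st z)) = st z := by
          have h0 := hreg (st z)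
          rw [hss] at h0
          rw [← ha]
          exact h0
        show m (m z (st z)) (m z (st z)) = m z (st z)
        rw [ha, h]
      have gefe : S9.W m [m (st x) x, m x (st x), m (st x) x] = S9.W m [m (st x) x] := by
        show some (m (m (st x) x) (m (m x (st x)) (m (st x) x))) = some (m (st x) x)
        refine congrArg some ?_
        simp only [ha]
        exact Option.some.inj g1
      have gfef : S9.W m [m x (st x), m (st x) x, m x (st x)] = S9.W m [m x (st x)] := by
        show some (m (m x (st x)) (m (m (st x) x) (m x (st x)))) = some (m x (st x))
        refine congrArg some ?_
        simp only [ha]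
        exact Option.some.inj g2
      have hb := S9Gen.gen_band ha horth hlc (m (st x) x) (m x (st x)) (m y (st y))
        hE (hFgen x) (hFgen y) gefe gfef
      have gband : S9.W m [st x, x, x, st x, y, st y] = S9.W m [st x, x, y, st y] := by
        have h := Option.some.inj hb
        show some (m (st x) (m x (m x (m (st x) (m y (st y)))))) = some (m (st x) (m x (m y (st y))))
        simp only [ha] at h
        exact congrArg some h
      have hm := S9Gen.gen_main ha hreg hss hanti x y gband
      have h := Option.some.inj hm
      rw [ha, ha]
      exact h.symm
    · -- (2) ⇒ (1)
      intro h2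
      refine ⟨?_, ?_, ?_⟩
      · -- completely regular
        intro x
        have hL : x = m (m (m x (st x)) (st x)) (m x x) := by
          have h := S9.h2R ha hss hanti h2 x (m x (st x))
          rw [hreg] at h
          rw [ha (m (m x (st x)) (st x)) x x] at h
          exact h
        have hR : x = m (m x x) (m (st x) (m (st x) x)) := by
          have h := h2 x (m (st x) x)
          rw [hxx x] at h
          rw [ha (m x x) (st x) (m (st x) x)] at h
          exact h
        exact ⟨Or.inr ⟨_, x, hL, rfl⟩, Or.inr ⟨_, x, hR, rfl⟩⟩
      · -- orthodox
        intro e f he hf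
        have hE : m (st e) (st e) = st e := by
          have h := congrArg st he; rwa [hanti] at h
        have hF : m (st f) (st f) = st f := by
          have h := congrArg st hf; rwa [hanti] at h
        have hc := S9Gen.gen_orth ha hreg hss hanti h2 e f
          (congrArg some he) (congrArg some hf) (congrArg some hE) (congrArg some hF)
        have h := Option.some.inj hc
        show m (m e f) (m e f) = m e f
        rw [ha]
        exact h
      · -- locally inverse
        intro e he a hmem
        obtain ⟨w, hw⟩ := hmem
        have hea : m e a = a := by rw [hw, ← ha, ← ha, he]
        have hae : m a e = a := by rw [hw, ha, he]
        have ex1 := S9Gen.gen_exist1 ha hreg hss hanti a e (congrArg some hea) (congrArg some hae)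
        have ex2 := S9Gen.gen_exist2 ha hreg hss hanti a e (congrArg some hea) (congrArg some hae)
        refine ⟨m (m e (st a)) e, ⟨⟨st a, rfl⟩, ?_, ?_⟩, ?_⟩
        · simp only [ha]
          exact Option.some.inj ex1
        · simp only [ha]
          exact Option.some.inj ex2
        · -- uniqueness
          rintro b' ⟨⟨w', hw'⟩, hb'1, hb'2⟩
          obtain ⟨b, hbdef⟩ : ∃ b : S, b = m (m e (st a)) e := ⟨_, rfl⟩
          have cond1 : m a (m b a) = a := by
            have h := Option.some.inj ex1
            rw [hbdef]; simp only [ha]; exact h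
          have cond2 : m b (m a b) = b := by
            have h := Option.some.inj ex2
            have h2' : m (m b a) b = b := by rw [hbdef]; simp only [ha]; exact h
            rw [← ha]; exact h2'
          have cond1' : m a (m b' a) = a := by
            have h := hb'1; simp only [ha] at h; exact h
          have cond2' : m b' (m a b') = b' := by
            have h := hb'2; simp only [ha] at h; exact h
          have heb : m e b = b := by rw [hbdef, ← ha, ← ha, he]
          have hbe : m b e = b := by rw [hbdef, ha, he]
          have heb' : m e b' = b' := by rw [hw', ← ha, ← ha, he]
          have hb'e : m b' e = b' := by rw [hw', ha, he]
          -- idempotents a*b, a*b', b*a, b'*a and their e-relations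
          have iab : m (m a b) (m a b) = m a b := by
            simp only [ha]; rw [cond2]
          have iab' : m (m a b') (m a b') = m a b' := by
            simp only [ha]; rw [cond2']
          have iba : m (m b a) (m b a) = m b a := by
            simp only [ha]; rw [cond1]
          have ib'a : m (m b' a) (m b' a) = m b' a := by
            simp only [ha]; rw [cond1']
          have stIdem : ∀ u : S, m u u = u → m (st u) (st u) = st u := fun u hu => by
            have h := congrArg st hu; rwa [hanti] at h
          have stAbs : ∀ u v : S, m u v = v → m (st v) (st u) = st v := fun u v huv => by
            have h := congrArg st huv; rwa [hanti] at h
          have stAbs' : ∀ u v : S, m v u = v → m (st u) (st v) = st v := fun u v huv => by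
            have h := congrArg st huv; rwa [hanti] at h
          have hee : m e e = e := he
          -- e-absorption for the four idempotents
          have e_ab : m e (m a b) = m a b := by rw [← ha, hea]
          have ab_e : m (m a b) e = m a b := by rw [ha, hbe]
          have e_ab' : m e (m a b') = m a b' := by rw [← ha, hea]
          have ab'_e : m (m a b') e = m a b' := by rw [ha, hb'e]
          have e_ba : m e (m b a) = m b a := by rw [← ha, heb]
          have ba_e : m (m b a) e = m b a := by rw [ha, hae]
          have e_b'a : m e (m b' a) = m b' a := by rw [← ha, heb']
          have b'a_e : m (m b' a) e = m b' a := by rw [ha, hae]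
          have comm1 := S9Gen.gen_L4 ha hreg hss hanti h2 e (m a b) (m a b')
            (congrArg some hee) (congrArg some iab) (congrArg some iab')
            (congrArg some (stIdem e hee)) (congrArg some (stIdem _ iab)) (congrArg some (stIdem _ iab'))
            (congrArg some e_ab) (congrArg some ab_e)
            (congrArg some (stAbs e (m a b) e_ab)) (congrArg some (stAbs' e (m a b) ab_e))
            (congrArg some e_ab') (congrArg some ab'_e)
            (congrArg some (stAbs e (m a b') e_ab')) (congrArg some (stAbs' e (m a b') ab'_e))
          have comm2 := S9Gen.gen_L4 ha hreg hss hanti h2 e (m b a) (m b' a)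
            (congrArg some hee) (congrArg some iba) (congrArg some ib'a)
            (congrArg some (stIdem e hee)) (congrArg some (stIdem _ iba)) (congrArg some (stIdem _ ib'a))
            (congrArg some e_ba) (congrArg some ba_e)
            (congrArg some (stAbs e (m b a) e_ba)) (congrArg some (stAbs' e (m b a) ba_e))
            (congrArg some e_b'a) (congrArg some b'a_e)
            (congrArg some (stAbs e (m b' a) e_b'a)) (congrArg some (stAbs' e (m b' a) b'a_e))
          have hcomm1 : m (m a b) (m a b') = m (m a b') (m a b) := Option.some.inj comm1
          have hcomm2 : m (m b a) (m b' a) = m (m b' a) (m b a) := Option.some.inj comm2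
          have gcomm1 : S9.W m [a, b, a, b'] = S9.W m [a, b', a, b] := by
            show some (m a (m b (m a b'))) = some (m a (m b' (m a b)))
            simp only [ha] at hcomm1
            exact congrArg some hcomm1
          have gcomm2 : S9.W m [b, a, b', a] = S9.W m [b', a, b, a] := by
            show some (m b (m a (m b' a))) = some (m b' (m a (m b a)))
            simp only [ha] at hcomm2
            exact congrArg some hcomm2
          have hu := S9Gen.gen_uniq ha a b b'
            (congrArg some cond1) (congrArg some cond1')
            (congrArg some cond2) (congrArg some cond2')
            gcomm1 gcomm2
          exact (Option.some.inj hu).trans hbdef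
  · constructor
    · -- (2) ⇒ (3)
      intro h2 x y z
      have hc := S9Gen.gen_23 ha hreg hss hanti h2 x y z
      have h := Option.some.inj hc
      simp only [ha]
      exact h
    · -- (3) ⇒ (2)
      intro h3 x y
      have h := h3 x (m (st x) x) y
      rw [hxx x] at h
      exact h
end

section
/- Let (S,·,*) be a regular *-semigroup and define a + b = ab. Then (S,+,·,*) satisfies the left regular *-semibrace axiom x(y+z) = xy + x(x*+z) if and only if S is completely regular, orthodox, and locally inverse (equivalently, S satisfies xyz = xyxx*z). -/
private theorem part1 {S : Type*} (m : S → S → S) (st : S → S)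
    (ha : ∀ a b c : S, m (m a b) c = m a (m b c))
    (hi : ∀ x : S, m (m x (st x)) x = x)
    (hss : ∀ x : S, st (st x) = x)
    (hst : ∀ x y : S, st (m x y) = m (st y) (st x))
    (hI : ∀ x y z : S, m (m x y) z = m (m (m (m x y) x) (st x)) z) :
    CompletelyRegular m ∧ Orthodox m ∧ LocallyInverse m := by
  have hi' : ∀ x : S, m x (m (st x) x) = x := fun x => by rw [← ha]; exact hi x
  -- L1 : x z = x (x (x* z))
  have L1 : ∀ x z : S, m x z = m x (m x (m (st x) z)) := by
    intro x z
    have h := hI x (m (st x) x) z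
    rw [hi' x] at h
    exact h.trans (by simp only [ha])
  -- L1s : a b = a (b* (b b))
  have L1s : ∀ a b : S, m a b = m a (m (st b) (m b b)) := by
    intro a b
    have h := L1 (st b) (st a)
    rw [hss b] at h
    have h2 := congrArg st h
    simp only [hst, hss] at h2
    exact h2.trans (by simp only [ha])
  -- I2 : a (b c) = a (c* (c (b c)))
  have I2 : ∀ a b c : S, m a (m b c) = m a (m (st c) (m c (m b c))) := by
    intro a b c
    have h := hI (st c) (st b) (st a)
    rw [hss c] at h
    have h2 := congrArg st h
    simp only [hst, hss] at h2
    exact h2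
  have hcr : CompletelyRegular m := by
    intro x
    constructor
    · right
      refine ⟨m x (m (st x) (st x)), x, ?_, rfl⟩
      have h := L1s (m x (st x)) x
      rw [hi x] at h
      exact h.trans (by simp only [ha])
    · right
      refine ⟨m (st x) (m (st x) x), x, ?_, rfl⟩
      have h := L1 x (m (st x) x)
      rw [hi' x] at h
      exact h.trans (by simp only [ha])
  have horth : Orthodox m := by
    intro e f he hf
    have he' : m e e = e := he
    have hf' : m f f = f := hf
    show m (m e f) (m e f) = m e f
    have h1 := hI e f f
    rw [show m (m e f) f = m e f by rw [ha, hf']] at h1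
    have h2 : ∀ w, m e w = m e (m (st e) w) := fun w => by
      calc m e w = m e (m e (m (st e) w)) := L1 e w
        _ = m (m e e) (m (st e) w) := (ha e e _).symm
        _ = m e (m (st e) w) := by rw [he']
    have h4 : m (m (m (m e f) e) (st e)) f = m (m e f) (m e f) := by
      calc m (m (m (m e f) e) (st e)) f
          = m e (m f (m e (m (st e) f))) := by simp only [ha]
        _ = m e (m f (m e f)) := by rw [← h2 f]
        _ = m (m e f) (m e f) := by simp only [ha]
    exact h4.symm.trans h1.symm
  -- lemma A : in an e-local pair, g h = h (g h)
  have lemA : ∀ e g h : S, m e e = e → m g g = g → m h h = h →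
      m e g = g → m g e = g → m e h = h → m h e = h → m g h = m h (m g h) := by
    intro e g h _ _ hhh heg _ heh _
    have h1 := I2 e g h
    have h2 : m e (m g h) = m g h := by rw [← ha, heg]
    have h4 := L1s e h
    rw [hhh, heh] at h4
    calc m g h = m e (m g h) := h2.symm
      _ = m e (m (st h) (m h (m g h))) := h1
      _ = m (m e (m (st h) h)) (m g h) := by simp only [ha]
      _ = m h (m g h) := by rw [← h4]
  have lemB : ∀ e g h : S, m e e = e → m g g = g → m h h = h →
      m e g = g → m g e = g → m e h = h → m h e = h → m g h = m (m g h) g := by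
    intro e g h hee hgg hhh heg hge heh hhe
    have hsee : m (st e) (st e) = st e := by rw [← hst, hee]
    have hsgg : m (st g) (st g) = st g := by rw [← hst, hgg]
    have hshh : m (st h) (st h) = st h := by rw [← hst, hhh]
    have h1 : m (st e) (st h) = st h := by rw [← hst, hhe]
    have h2 : m (st h) (st e) = st h := by rw [← hst, heh]
    have h3 : m (st e) (st g) = st g := by rw [← hst, hge]
    have h4 : m (st g) (st e) = st g := by rw [← hst, heg]
    have hA := lemA (st e) (st h) (st g) hsee hshh hsgg h1 h2 h3 h4
    have h5 := congrArg st hA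
    simp only [hst, hss] at h5
    exact h5
  have lemC : ∀ e g h : S, m e e = e → m g g = g → m h h = h →
      m e g = g → m g e = g → m e h = h → m h e = h → m g h = m h g := by
    intro e g h hee hgg hhh heg hge heh hhe
    have hA := lemA e h g hee hhh hgg heh hhe heg hge
    have hB := lemB e g h hee hgg hhh heg hge heh hhe
    calc m g h = m (m g h) g := hB
      _ = m g (m h g) := by simp only [ha]
      _ = m h g := hA.symm
  have hli : LocallyInverse m := by
    intro e he a ha0
    obtain ⟨x0, hax⟩ := ha0
    have he' : m e e = e := he
    have sand : ∀ (c : S), (∃ x, c = m (m e x) e) → m e c = c ∧ m c e = c := by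
      rintro c ⟨xc, rfl⟩
      constructor
      · calc m e (m (m e xc) e) = m (m e e) (m xc e) := by simp only [ha]
          _ = m e (m xc e) := by rw [he']
          _ = m (m e xc) e := by simp only [ha]
      · calc m (m (m e xc) e) e = m (m e xc) (m e e) := by simp only [ha]
          _ = m (m e xc) e := by rw [he']
    obtain ⟨hea, hae⟩ := sand a ⟨x0, hax⟩
    obtain ⟨heB, hBe⟩ := sand (m (m e (st a)) e) ⟨st a, rfl⟩
    have hisa : m (m (st a) a) (st a) = st a := by
      have h := hi (st a); rwa [hss] at h
    have hBaba : m (m a (m (m e (st a)) e)) a = a := by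
      calc m (m a (m (m e (st a)) e)) a
          = m (m a e) (m (st a) (m e a)) := by simp only [ha]
        _ = m a (m (st a) (m e a)) := by rw [hae]
        _ = m a (m (st a) a) := by rw [hea]
        _ = a := hi' a
    have hBbab : m (m (m (m e (st a)) e) a) (m (m e (st a)) e) = m (m e (st a)) e := by
      calc m (m (m (m e (st a)) e) a) (m (m e (st a)) e)
          = m e (m (st a) (m (m e a) (m e (m (st a) e)))) := by simp only [ha]
        _ = m e (m (st a) (m a (m e (m (st a) e)))) := by rw [hea]
        _ = m e (m (st a) (m (m a e) (m (st a) e))) := by simp only [ha]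
        _ = m e (m (st a) (m a (m (st a) e))) := by rw [hae]
        _ = m e (m (m (m (st a) a) (st a)) e) := by simp only [ha]
        _ = m e (m (st a) e) := by rw [hisa]
        _ = m (m e (st a)) e := by simp only [ha]
    refine ⟨m (m e (st a)) e, ⟨⟨st a, rfl⟩, hBaba, hBbab⟩, ?_⟩
    rintro c ⟨⟨xc, hcx⟩, hac, hcc⟩
    obtain ⟨hec, hce⟩ := sand c ⟨xc, hcx⟩
    set B := m (m e (st a)) e with hBdef
    -- idempotents Ba, ca, aB, ac ; all e-local
    have iP1 : m (m B a) (m B a) = m B a := by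
      calc m (m B a) (m B a) = m B (m (m a B) a) := by simp only [ha]
        _ = m B a := by rw [hBaba]
    have iP2 : m (m c a) (m c a) = m c a := by
      calc m (m c a) (m c a) = m c (m (m a c) a) := by simp only [ha]
        _ = m c a := by rw [hac]
    have iQ1 : m (m a B) (m a B) = m a B := by
      calc m (m a B) (m a B) = m a (m (m B a) B) := by simp only [ha]
        _ = m a B := by rw [hBbab]
    have iQ2 : m (m a c) (m a c) = m a c := by
      calc m (m a c) (m a c) = m a (m (m c a) c) := by simp only [ha]
        _ = m a c := by rw [hcc]
    have lP1 : m e (m B a) = m B a := by rw [← ha, heB]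
    have rP1 : m (m B a) e = m B a := by rw [ha, hae]
    have lP2 : m e (m c a) = m c a := by rw [← ha, hec]
    have rP2 : m (m c a) e = m c a := by rw [ha, hae]
    have lQ1 : m e (m a B) = m a B := by rw [← ha, hea]
    have rQ1 : m (m a B) e = m a B := by rw [ha, hBe]
    have lQ2 : m e (m a c) = m a c := by rw [← ha, hea]
    have rQ2 : m (m a c) e = m a c := by rw [ha, hce]
    have comm1 := lemC e (m B a) (m c a) he' iP1 iP2 lP1 rP1 lP2 rP2
    have comm2 := lemC e (m a B) (m a c) he' iQ1 iQ2 lQ1 rQ1 lQ2 rQ2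
    have chainB : B = m (m c a) B := by
      calc B = m (m B a) B := hBbab.symm
        _ = m (m B (m (m a c) a)) B := congrArg (fun w => m (m B w) B) hac.symm
        _ = m (m (m B a) (m c a)) B := by simp only [ha]
        _ = m (m (m c a) (m B a)) B := congrArg (fun w => m w B) comm1
        _ = m (m c a) (m (m B a) B) := by simp only [ha]
        _ = m (m c a) B := by rw [hBbab]
    have chainC : c = m (m c a) B := by
      calc c = m (m c a) c := hcc.symm
        _ = m (m c (m (m a B) a)) c := congrArg (fun w => m (m c w) c) hBaba.symm
        _ = m c (m (m a B) (m a c)) := by simp only [ha]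
        _ = m c (m (m a c) (m a B)) := congrArg (fun w => m c w) comm2
        _ = m (m (m c a) c) (m a B) := by simp only [ha]
        _ = m c (m a B) := by rw [hcc]
        _ = m (m c a) B := by simp only [ha]
    exact chainC.trans chainB.symm
  exact ⟨hcr, horth, hli⟩

private theorem part2 {S : Type*} (m : S → S → S) (st : S → S)
    (ha : ∀ a b c : S, m (m a b) c = m a (m b c))
    (hi : ∀ x : S, m (m x (st x)) x = x)
    (hcr : CompletelyRegular m) (ho : Orthodox m) (hli : LocallyInverse m) :
    ∀ x y z : S, m (m x y) z = m (m (m (m x y) x) (st x)) z := by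
  -- local commutation of idempotents, from locally inverse + orthodox
  have hLC : ∀ e g h : S, m e e = e → m g g = g → m h h = h →
      m e g = g → m g e = g → m e h = h → m h e = h → m g h = m h g := by
    intro e g h hee hgg hhh heg hge heh hhe
    have hmem : m g h = m (m e (m g h)) e := by
      calc m g h = m g (m h e) := by rw [hhe]
        _ = m (m g h) e := by simp only [ha]
        _ = m (m (m e g) h) e := congrArg (fun w => m (m w h) e) heg.symm
        _ = m (m e (m g h)) e := by simp only [ha]
    have hmem2 : m h g = m (m e (m h g)) e := by
      calc m h g = m h (m g e) := by rw [hge]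
        _ = m (m h g) e := by simp only [ha]
        _ = m (m (m e h) g) e := congrArg (fun w => m (m w g) e) heh.symm
        _ = m (m e (m h g)) e := by simp only [ha]
    have hgh2 : m (m g h) (m g h) = m g h := ho g h hgg hhh
    have hhg2 : m (m h g) (m h g) = m h g := ho h g hhh hgg
    obtain ⟨b, _, hbu⟩ := hli e hee (m g h) ⟨m g h, hmem⟩
    have c1 : m g h = b := by
      refine hbu (m g h) ⟨⟨m g h, hmem⟩, ?_, ?_⟩ <;> (rw [hgh2]; exact hgh2)
    have c2 : m h g = b := by
      refine hbu (m h g) ⟨⟨m h g, hmem2⟩, ?_, ?_⟩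
      · calc m (m (m g h) (m h g)) (m g h)
            = m g (m (m h h) (m (m g g) h)) := by simp only [ha]
          _ = m g (m h (m g h)) := by rw [hhh, hgg]
          _ = m (m g h) (m g h) := by simp only [ha]
          _ = m g h := hgh2
      · calc m (m (m h g) (m g h)) (m h g)
            = m h (m (m g g) (m (m h h) g)) := by simp only [ha]
          _ = m h (m g (m h g)) := by rw [hgg, hhh]
          _ = m (m h g) (m h g) := by simp only [ha]
          _ = m h g := hhg2
    exact c1.trans c2.symm
  -- local identities from complete regularity
  have hloc : ∀ a : S, ∃ e : S, (m e e = e ∧ m e a = a ∧ m a e = a) ∧ ∃ s, e = m a s := by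
    intro a
    obtain ⟨hL, hR⟩ := hcr a
    obtain ⟨t, ht⟩ : ∃ t, a = m t (m a a) := by
      rcases hL with h | ⟨u, v, hu, hv⟩
      · refine ⟨m a (st a), ?_⟩
        calc a = m (m a (st a)) a := (hi a).symm
          _ = m (m a (st a)) (m a a) := by rw [← h]
      · exact ⟨u, hu⟩
    obtain ⟨s, hs⟩ : ∃ s, a = m (m a a) s := by
      rcases hR with h | ⟨u, v, hu, hv⟩
      · refine ⟨m (st a) a, ?_⟩
        calc a = m (m a (st a)) a := (hi a).symm
          _ = m a (m (st a) a) := by simp only [ha]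
          _ = m (m a a) (m (st a) a) := by rw [← h]
      · exact ⟨u, hu⟩
    have hts : m t a = m a s := by
      calc m t a = m t (m (m a a) s) := by rw [← hs]
        _ = m (m t (m a a)) s := by simp only [ha]
        _ = m a s := by rw [← ht]
    refine ⟨m a s, ⟨?_, ?_, ?_⟩, s, rfl⟩
    · calc m (m a s) (m a s) = m (m t a) (m a s) := congrArg (fun w => m w (m a s)) hts.symm
        _ = m t (m (m a a) s) := by simp only [ha]
        _ = m t a := by rw [← hs]
        _ = m a s := hts
    · calc m (m a s) a = m (m t a) a := congrArg (fun w => m w a) hts.symm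
        _ = m t (m a a) := by simp only [ha]
        _ = a := ht.symm
    · calc m a (m a s) = m (m a a) s := by simp only [ha]
        _ = a := hs.symm
  -- the band lemma: if e,h,k idempotent, eh = h, he = e then h k = e k
  have bandB : ∀ e h k : S, m e e = e → m h h = h → m k k = k →
      m e h = h → m h e = e → m h k = m e k := by
    intro e h k hee hhh hkk heh hhe
    have hkh : m (m k h) (m k h) = m k h := ho k h hkk hhh
    have hke : m (m k e) (m k e) = m k e := ho k e hkk hee
    have hek : m (m e k) (m e k) = m e k := ho e k hee hkk
    have hhk : m (m h k) (m h k) = m h k := ho h k hhh hkk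
    -- LC1'' : h k h e k h = h e k h k h
    have hhkh : m (m (m h k) h) (m (m h k) h) = m (m h k) h := ho (m h k) h hhk hhh
    have hhek : m (m h (m e k)) (m h (m e k)) = m h (m e k) := ho h (m e k) hhh hek
    have hhekh : m (m (m h (m e k)) h) (m (m h (m e k)) h) = m (m h (m e k)) h :=
      ho (m h (m e k)) h hhek hhh
    have lg1 : m h (m (m h k) h) = m (m h k) h := by
      calc m h (m (m h k) h) = m (m h h) (m k h) := by simp only [ha]
        _ = m h (m k h) := by rw [hhh]
        _ = m (m h k) h := by simp only [ha]
    have rg1 : m (m (m h k) h) h = m (m h k) h := by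
      calc m (m (m h k) h) h = m (m h k) (m h h) := by simp only [ha]
        _ = m (m h k) h := by rw [hhh]
    have lg2 : m h (m (m h (m e k)) h) = m (m h (m e k)) h := by
      calc m h (m (m h (m e k)) h) = m (m h h) (m (m e k) h) := by simp only [ha]
        _ = m h (m (m e k) h) := by rw [hhh]
        _ = m (m h (m e k)) h := by simp only [ha]
    have rg2 : m (m (m h (m e k)) h) h = m (m h (m e k)) h := by
      calc m (m (m h (m e k)) h) h = m (m h (m e k)) (m h h) := by simp only [ha]
        _ = m (m h (m e k)) h := by rw [hhh]
    have A1 := hLC h (m (m h k) h) (m (m h (m e k)) h) hhh hhkh hhekh lg1 rg1 lg2 rg2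
    have LC1 : m h (m k (m h (m e (m k h)))) = m h (m e (m k (m h (m k h)))) := by
      calc m h (m k (m h (m e (m k h))))
          = m h (m k (m (m h h) (m e (m k h)))) :=
            congrArg (fun w => m h (m k (m w (m e (m k h))))) hhh.symm
        _ = m (m (m h k) h) (m (m h (m e k)) h) := by simp only [ha]
        _ = m (m (m h (m e k)) h) (m (m h k) h) := A1
        _ = m h (m e (m k (m (m h h) (m k h)))) := by simp only [ha]
        _ = m h (m e (m k (m h (m k h)))) := by rw [hhh]
    -- LC2 : (kek)(khk) = (khk)(kek)
    have hkek : m (m (m k e) k) (m (m k e) k) = m (m k e) k := ho (m k e) k hke hkk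
    have hkhk : m (m (m k h) k) (m (m k h) k) = m (m k h) k := ho (m k h) k hkh hkk
    have lg3 : m k (m (m k e) k) = m (m k e) k := by
      calc m k (m (m k e) k) = m (m k k) (m e k) := by simp only [ha]
        _ = m k (m e k) := by rw [hkk]
        _ = m (m k e) k := by simp only [ha]
    have rg3 : m (m (m k e) k) k = m (m k e) k := by
      calc m (m (m k e) k) k = m (m k e) (m k k) := by simp only [ha]
        _ = m (m k e) k := by rw [hkk]
    have lg4 : m k (m (m k h) k) = m (m k h) k := by
      calc m k (m (m k h) k) = m (m k k) (m h k) := by simp only [ha]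
        _ = m k (m h k) := by rw [hkk]
        _ = m (m k h) k := by simp only [ha]
    have rg4 : m (m (m k h) k) k = m (m k h) k := by
      calc m (m (m k h) k) k = m (m k h) (m k k) := by simp only [ha]
        _ = m (m k h) k := by rw [hkk]
    have LC2 := hLC k (m (m k e) k) (m (m k h) k) hkk hkek hkhk lg3 rg3 lg4 rg4
    -- G2 : h k e = e k e
    have hkhe0 : m (m (m k h) e) (m (m k h) e) = m (m k h) e := ho (m k h) e hkh hee
    have G2 : m h (m k e) = m e (m k e) := by
      calc m h (m k e)
          = m h (m k (m h e)) := congrArg (fun w => m h (m k w)) hhe.symm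
        _ = m h (m (m k h) e) := by simp only [ha]
        _ = m h (m (m (m k h) e) (m (m k h) e)) := congrArg (fun w => m h w) hkhe0.symm
        _ = m (m h (m k (m h (m e (m k h))))) e := by simp only [ha]
        _ = m (m h (m e (m k (m h (m k h))))) e := by rw [LC1]
        _ = m (m h e) (m (m (m k h) (m k h)) e) := by simp only [ha]
        _ = m (m h e) (m (m k h) e) := by rw [hkh]
        _ = m e (m (m k h) e) := by rw [hhe]
        _ = m (m e k) (m h e) := by simp only [ha]
        _ = m (m e k) e := by rw [hhe]
        _ = m e (m k e) := by simp only [ha]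
    -- MA : k h k e k = k e k
    have MA : m k (m h (m k (m e k))) = m k (m e k) := by
      calc m k (m h (m k (m e k)))
          = m k (m (m h (m k e)) k) := by simp only [ha]
        _ = m k (m (m e (m k e)) k) := by rw [G2]
        _ = m (m (m k e) (m k e)) k := by simp only [ha]
        _ = m (m k e) k := by rw [hke]
        _ = m k (m e k) := by simp only [ha]
    -- MB : k e k h k = k e k
    have MB : m k (m e (m k (m h k))) = m k (m e k) := by
      calc m k (m e (m k (m h k)))
          = m k (m e (m (m k k) (m h k))) :=
            congrArg (fun w => m k (m e (m w (m h k)))) hkk.symm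
        _ = m (m (m k e) k) (m (m k h) k) := by simp only [ha]
        _ = m (m (m k h) k) (m (m k e) k) := LC2
        _ = m k (m h (m (m k k) (m e k))) := by simp only [ha]
        _ = m k (m h (m k (m e k))) := by rw [hkk]
        _ = m k (m e k) := MA
    -- M2 : h k = e k h k
    have M2 : m h k = m e (m k (m h k)) := by
      calc m h k = m (m h k) (m h k) := hhk.symm
        _ = m h (m k (m h k)) := by simp only [ha]
        _ = m h (m k (m (m e h) k)) := congrArg (fun w => m h (m k (m w k))) heh.symm
        _ = m (m h (m k e)) (m h k) := by simp only [ha]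
        _ = m (m e (m k e)) (m h k) := by rw [G2]
        _ = m e (m k (m (m e h) k)) := by simp only [ha]
        _ = m e (m k (m h k)) := by rw [heh]
    -- M3 : e k h k = e k
    have M3 : m e (m k (m h k)) = m e k := by
      calc m e (m k (m h k))
          = m (m e k) (m h k) := by simp only [ha]
        _ = m (m (m e k) (m e k)) (m h k) := congrArg (fun w => m w (m h k)) hek.symm
        _ = m e (m k (m e (m k (m h k)))) := by simp only [ha]
        _ = m e (m k (m e k)) := congrArg (fun w => m e w) MB
        _ = m (m e k) (m e k) := by simp only [ha]
        _ = m e k := hek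
    exact M2.trans M3
  -- assembly
  intro x y z
  obtain ⟨e, ⟨hee, heu, hue⟩, s, hes⟩ := hloc (m x y)
  obtain ⟨k, ⟨hkk, hkz, hzk⟩, -⟩ := hloc z
  have hff : m (m x (st x)) (m x (st x)) = m x (st x) := by
    calc m (m x (st x)) (m x (st x)) = m (m (m x (st x)) x) (st x) := by simp only [ha]
      _ = m x (st x) := by rw [hi x]
  have hfu : m (m x (st x)) (m x y) = m x y := by
    calc m (m x (st x)) (m x y) = m (m (m x (st x)) x) y := by simp only [ha]
      _ = m x y := by rw [hi x]
  have hfe : m (m x (st x)) e = e := by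
    rw [hes]
    calc m (m x (st x)) (m (m x y) s)
        = m (m (m x (st x)) (m x y)) s := by simp only [ha]
      _ = m (m x y) s := by rw [hfu]
  have hhh' : m (m e (m x (st x))) (m e (m x (st x))) = m e (m x (st x)) :=
    ho e (m x (st x)) hee hff
  have heh' : m e (m e (m x (st x))) = m e (m x (st x)) := by
    calc m e (m e (m x (st x))) = m (m e e) (m x (st x)) := (ha _ _ _).symm
      _ = m e (m x (st x)) := by rw [hee]
  have hhe' : m (m e (m x (st x))) e = e := by
    calc m (m e (m x (st x))) e = m e (m (m x (st x)) e) := ha _ _ _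
      _ = m e e := by rw [hfe]
      _ = e := hee
  have hk := bandB e (m e (m x (st x))) k hee hhh' hkk heh' hhe'
  have main : m (m (m (m x y) x) (st x)) z = m (m x y) z := by
    calc m (m (m (m x y) x) (st x)) z
        = m (m x y) (m (m x (st x)) z) := by simp only [ha]
      _ = m (m (m x y) e) (m (m x (st x)) z) := congrArg (fun w => m w (m (m x (st x)) z)) hue.symm
      _ = m (m x y) (m (m e (m x (st x))) z) := by simp only [ha]
      _ = m (m x y) (m (m e (m x (st x))) (m k z)) :=
          congrArg (fun w => m (m x y) (m (m e (m x (st x))) w)) hkz.symm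
      _ = m (m x y) (m (m (m e (m x (st x))) k) z) := by simp only [ha]
      _ = m (m x y) (m (m e k) z) := by rw [hk]
      _ = m (m (m x y) e) (m k z) := by simp only [ha]
      _ = m (m x y) (m k z) := congrArg (fun w => m w (m k z)) hue
      _ = m (m x y) z := by rw [hkz]
  exact main.symm

theorem stmt12 {S : Type*} (m : S → S → S) (st : S → S)
    (hS : RegStar m st) (add : S → S → S) (hadd : ∀ a b : S, add a b = m a b) :
    ((∀ x y z : S, m x (add y z) = add (m x y) (m x (add (st x) z))) ↔
      (CompletelyRegular m ∧ Orthodox m ∧ LocallyInverse m)) ∧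
    ((CompletelyRegular m ∧ Orthodox m ∧ LocallyInverse m) ↔
      (∀ x y z : S, m (m x y) z = m (m (m (m x y) x) (st x)) z)) := by
  obtain ⟨ha', hi, hss, hst⟩ := hS
  have ha : ∀ a b c : S, m (m a b) c = m a (m b c) := ha'
  have bridge : (∀ x y z : S, m x (add y z) = add (m x y) (m x (add (st x) z))) ↔
      (∀ x y z : S, m (m x y) z = m (m (m (m x y) x) (st x)) z) := by
    simp only [hadd]
    constructor
    · intro h x y z
      calc m (m x y) z = m x (m y z) := ha x y z
        _ = m (m x y) (m x (m (st x) z)) := h x y z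
        _ = m (m (m (m x y) x) (st x)) z := by simp only [ha]
    · intro h x y z
      calc m x (m y z) = m (m x y) z := (ha x y z).symm
        _ = m (m (m (m x y) x) (st x)) z := h x y z
        _ = m (m x y) (m x (m (st x) z)) := by simp only [ha]
  have fwd : (∀ x y z : S, m (m x y) z = m (m (m (m x y) x) (st x)) z) →
      CompletelyRegular m ∧ Orthodox m ∧ LocallyInverse m :=
    fun hid => part1 m st ha hi hss hst hid
  have bwd : (CompletelyRegular m ∧ Orthodox m ∧ LocallyInverse m) →
      (∀ x y z : S, m (m x y) z = m (m (m (m x y) x) (st x)) z) :=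
    fun ⟨h1, h2, h3⟩ => part2 m st ha hi h1 h2 h3
  exact ⟨bridge.trans ⟨fwd, bwd⟩, ⟨bwd, fwd⟩⟩
end

section
/- Let (S,·,*) be a regular *-semigroup and define a + b = a*b*. Then the operation + is associative if and only if S satisfies x = x* for all x. -/
theorem stmt13 {S : Type*} (m : S → S → S) (st : S → S)
    (hS : RegStar m st) (add : S → S → S)
    (hadd : ∀ a b : S, add a b = m (st a) (st b)) :
    Assoc add ↔ ∀ x : S, x = st x := by
  obtain ⟨hassoc, hreg, hinv, hanti⟩ := hS
  have triple : ∀ a : S, m (m (st a) a) (st a) = st a := by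
    intro a
    have := hreg (st a)
    rwa [hinv] at this
  constructor
  · intro hAdd
    -- the unfolded associativity identity
    have H : ∀ a b c : S, m (m b a) (st c) = m (st a) (m c b) := by
      intro a b c
      have := hAdd a b c
      simp only [hadd, hanti, hinv] at this
      exact this
    -- squares: a·a = a*·a*
    have h2 : ∀ a : S, m a a = m (st a) (st a) := by
      intro a
      have h := H a (m a (st a)) (st a)
      rw [hreg a, hinv] at h
      -- h : m a a = m (st a) (m (st a) (m a (st a)))
      rw [← hassoc (st a) a (st a), triple] at h
      exact h
    -- star-reversed identity
    have h4 : ∀ a c : S, m c (m a a) = m (m (st a) (st c)) a := by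
      intro a c
      have h := congrArg st (H a a c)
      rw [hanti, hanti, hinv, hanti, hanti, hinv, ← h2] at h
      exact h
    -- a·a = a*·a
    have h5 : ∀ a : S, m a a = m (st a) a := by
      intro a
      have h := h4 a (m a (st a))
      rw [← hassoc (m a (st a)) a a, hreg a, hanti, hinv,
        ← hassoc (st a) a (st a), triple] at h
      exact h
    -- a·a = a·a*
    have h6 : ∀ a : S, m a a = m a (st a) := by
      intro a
      have h := h5 (st a)
      rw [hinv] at h
      rw [h2 a]
      exact h
    -- cube : a³ = a
    have hcube : ∀ a : S, m (m a a) a = a := by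
      intro a
      rw [h6 a, hreg]
    -- square idempotent
    have hsq : ∀ a : S, m (m a a) (m a a) = m a a := by
      intro a
      rw [← hassoc, hcube]
    intro a
    have h := H a (m a a) (m a a)
    rw [hcube a, hanti, ← h2 a, hsq a, ← hassoc a a a, hcube a,
      h6 a, ← hassoc (st a) a (st a), triple] at h
    exact h
  · intro hstar a b c
    simp only [hadd, ← hstar]
    exact hassoc a b c
end

section
/- Let (S,·,*) be a regular *-semigroup and define a + b = a*b. Then the operation + is associative if and only if S satisfies x = x* for all x. -/
theorem stmt14 {S : Type*} (m : S → S → S) (st : S → S)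
    (hS : RegStar m st) (add : S → S → S)
    (hadd : ∀ a b : S, add a b = m (st a) b) :
    Assoc add ↔ ∀ x : S, x = st x := by
  obtain ⟨hA, hreg, hinv, hanti⟩ := hS
  constructor
  · intro h
    -- rephrased associativity
    have Q : ∀ a b c : S, m (m b a) c = m (st a) (m b c) := by
      intro a b c
      have := h a (st b) c
      simp only [hadd, hanti, hinv] at this
      exact this
    -- star of regularity: x* x x* = x*
    have hreg' : ∀ x : S, m (m (st x) x) (st x) = st x := by
      intro x
      have := hreg (st x)
      rw [hinv] at this
      exact this
    -- E1 : b b b* = b*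
    have E1 : ∀ b : S, m (m b b) (st b) = st b := by
      intro b
      have := Q b b (st b)
      rw [this, ← hA, hreg']
    -- E3 : b b = b* b
    have E3 : ∀ b : S, m b b = m (st b) b := by
      intro b
      have h1 : m (m (m b b) (st b)) b = m (st b) b := by rw [E1]
      calc m b b = m b (m (m b (st b)) b) := by rw [hreg]
        _ = m (m (m b b) (st b)) b := by rw [hA, hA, hA]
        _ = m (st b) b := h1
    intro x
    -- E4 : x* x* = x x*
    have E4 : m (st x) (st x) = m x (st x) := by
      have := E3 (st x)
      rw [hinv] at this
      exact this
    -- key : x* (x x) = x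
    have key : m (st x) (m x x) = x := by
      have h5 : m (st x) (m x x) = m (st x) (m (st x) x) := by
        rw [← hA]; exact Q x (st x) x
      rw [h5, ← hA, E4, hreg]
    -- take star of key
    have := congrArg st key
    rw [hanti, hanti, hinv, hA, ← hA, E4, hreg] at this
    exact this
  · intro h a b c
    simp only [hadd, ← h]
    exact hA a b c
end
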